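/- arXiv:1906.04318 — 4 statements merged into one kernel-verified Lean document; each statement's English description precedes it below -/
import Mathlib

section
/- Let K be a set of q^2+2q+1 points in PG(4,q), q ≥ 3, such that every 3-space meets K in either one, two or three lines, a line and a non-degenerate conic, or a twisted cubic. Then K contains at least one non-degenerate conic. -/
open Projectivization

variable (F : Type) [Field F] [Fintype F]

/-- The points of the projective space `PG(n,q)` over a field `F` (of order `q`). -/
abbrev PGPt (n : ℕ) := Projectivization F (Fin (n + 1) → F)

/-- `S` is a projective subspace of (projective) dimension `d` of `PG(n,q)`. -/
def IsSubsp (n d : ℕ) (S : Set (PGPt F n)) : Prop :=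
  ∃ W : Submodule F (Fin (n + 1) → F), Module.finrank F W = d + 1 ∧
    S = {p | p.submodule ≤ W}

/-- A line of `PG(n,q)`. -/
abbrev IsLine (n : ℕ) (S : Set (PGPt F n)) : Prop := IsSubsp F n 1 S

/-- A plane of `PG(n,q)`. -/
abbrev IsPlane (n : ℕ) (S : Set (PGPt F n)) : Prop := IsSubsp F n 2 S

/-- A 3-space (hyperplane) of `PG(4,q)`. -/
abbrev IsSolid (S : Set (PGPt F 4)) : Prop := IsSubsp F 4 3 S

/-- A non-degenerate conic of `PG(n,q)` : the image of the standard conic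
`{[a² : ab : b²]}` of `PG(2,q)` under an injective linear map. -/
def IsConic (n : ℕ) (C : Set (PGPt F n)) : Prop :=
  ∃ f : (Fin 3 → F) →ₗ[F] (Fin (n + 1) → F), Function.Injective f ∧
    C = {p | ∃ a b : F, (a ≠ 0 ∨ b ≠ 0) ∧
      p.submodule = Submodule.span F {f ![a ^ 2, a * b, b ^ 2]}}

/-- A twisted cubic of `PG(n,q)` : the image of the standard twisted cubic
`{[a³ : a²b : ab² : b³]}` of `PG(3,q)` under an injective linear map. -/
def IsTwistedCubic (n : ℕ) (C : Set (PGPt F n)) : Prop :=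
  ∃ f : (Fin 4 → F) →ₗ[F] (Fin (n + 1) → F), Function.Injective f ∧
    C = {p | ∃ a b : F, (a ≠ 0 ∨ b ≠ 0) ∧
      p.submodule = Submodule.span F {f ![a ^ 3, a ^ 2 * b, a * b ^ 2, b ^ 3]}}

/-- A ruled cubic surface of `PG(4,q)` : the image, under a projective transformation,
of the standard scroll ruling the line `{[a : b : 0 : 0 : 0]}` and the conic
`{[0 : 0 : a² : ab : b²]}` according to a projectivity (normalized to the identity). -/
def IsRuledCubicSurface (K : Set (PGPt F 4)) : Prop :=
  ∃ g : (Fin 5 → F) ≃ₗ[F] (Fin 5 → F),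
    K = {p | ∃ a b s t : F, (a ≠ 0 ∨ b ≠ 0) ∧ (s ≠ 0 ∨ t ≠ 0) ∧
      p.submodule = Submodule.span F {g ![s * a, s * b, t * a ^ 2, t * (a * b), t * b ^ 2]}}

/-- The intersection of the 3-space `Pi` with `K` is one line. -/
def TypeOneLine (K Pi : Set (PGPt F 4)) : Prop :=
  ∃ ℓ, IsLine F 4 ℓ ∧ K ∩ Pi = ℓ

/-- The intersection of the 3-space `Pi` with `K` is two (distinct) lines. -/
def TypeTwoLines (K Pi : Set (PGPt F 4)) : Prop :=
  ∃ ℓ m, IsLine F 4 ℓ ∧ IsLine F 4 m ∧ ℓ ≠ m ∧ K ∩ Pi = ℓ ∪ m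

/-- The intersection of the 3-space `Pi` with `K` is three (distinct) lines. -/
def TypeThreeLines (K Pi : Set (PGPt F 4)) : Prop :=
  ∃ ℓ m n, IsLine F 4 ℓ ∧ IsLine F 4 m ∧ IsLine F 4 n ∧
    ℓ ≠ m ∧ ℓ ≠ n ∧ m ≠ n ∧ K ∩ Pi = ℓ ∪ m ∪ n

/-- The intersection of the 3-space `Pi` with `K` is a line and a non-degenerate conic. -/
def TypeLineConic (K Pi : Set (PGPt F 4)) : Prop :=
  ∃ ℓ C, IsLine F 4 ℓ ∧ IsConic F 4 C ∧ K ∩ Pi = ℓ ∪ C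

/-- The intersection of the 3-space `Pi` with `K` is a twisted cubic. -/
def TypeTwistedCubic (K Pi : Set (PGPt F 4)) : Prop :=
  ∃ C, IsTwistedCubic F 4 C ∧ K ∩ Pi = C

/-- The intersection of the 3-space `Pi` with `K` is a single point. -/
def TypePoint (K Pi : Set (PGPt F 4)) : Prop :=
  ∃ P, K ∩ Pi = {P}

/-- The intersection of the 3-space `Pi` with `K` is a non-degenerate conic and two lines. -/
def TypeConicTwoLines (K Pi : Set (PGPt F 4)) : Prop :=
  ∃ C ℓ m, IsConic F 4 C ∧ IsLine F 4 ℓ ∧ IsLine F 4 m ∧ ℓ ≠ m ∧ K ∩ Pi = C ∪ ℓ ∪ m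

/-- The intersection of the 3-space `Pi` with `K` is a line and a twisted cubic. -/
def TypeLineTwistedCubic (K Pi : Set (PGPt F 4)) : Prop :=
  ∃ ℓ C, IsLine F 4 ℓ ∧ IsTwistedCubic F 4 C ∧ K ∩ Pi = ℓ ∪ C

/-- Every 3-space meets `K` in one, two or three lines, a line and a
non-degenerate conic, or a twisted cubic. -/
def FiveTypeHyp (K : Set (PGPt F 4)) : Prop :=
  ∀ Pi, IsSolid F Pi →
    TypeOneLine F K Pi ∨ TypeTwoLines F K Pi ∨ TypeThreeLines F K Pi ∨
      TypeLineConic F K Pi ∨ TypeTwistedCubic F K Pi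

/-- Every 3-space meets `K` in one of the eight allowed types. -/
def EightTypeHyp (K : Set (PGPt F 4)) : Prop :=
  ∀ Pi, IsSolid F Pi →
    TypeOneLine F K Pi ∨ TypeTwoLines F K Pi ∨ TypeThreeLines F K Pi ∨
      TypeLineConic F K Pi ∨ TypeTwistedCubic F K Pi ∨
      TypePoint F K Pi ∨ TypeConicTwoLines F K Pi ∨ TypeLineTwistedCubic F K Pi

/-- `m` lists the `q+1` sticks of `K` (pairwise skew lines partitioning `K`) and `b` is
the baseline: a further line of `K` meeting every stick. -/
def SticksAndBase (q : ℕ) (K : Set (PGPt F 4)) (m : Fin (q + 1) → Set (PGPt F 4))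
    (b : Set (PGPt F 4)) : Prop :=
  (∀ i, IsLine F 4 (m i)) ∧ (∀ i j, i ≠ j → Disjoint (m i) (m j)) ∧ (⋃ i, m i) = K ∧
    IsLine F 4 b ∧ b ⊆ K ∧ (∀ i, b ≠ m i) ∧ (∀ i, (b ∩ m i).Nonempty)

/-!
Suppose that `K` contains no conic. Then every solid meets `K` in at most three lines of `K` or
in a twisted cubic, which has at most `q + 1` points and no three of them collinear. Counting `K`
over the `q + 1` solids through a plane shows that `K` contains a line, that every point of `K`
lies on a line of `K`, and that no three lines of `K` are coplanar. A point on at least `q + 1`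
lines of `K` lies on exactly `q + 1` of them; two such points are always joined by a line of
`K`, while a point of `K` off the cone of lines through one of them is again such a point, so
there are none. Then any two lines of `K` meet, since a skew pair would force `q + 1` lines of
`K` into a solid section made of at most three. So all lines of `K` pass through one point,
which lies on at most `q` of them, and these cover at most `q ^ 2 + 1` points.
-/

open Module Submodule
open scoped LinearAlgebra.Projectivization

namespace PG

lemma ncard_biUnion_le_mul {ι α : Type*} {T : Set ι} (hT : T.Finite) (s : ι → Set α) {m : ℕ}
    (hm : ∀ i ∈ T, (s i).ncard ≤ m) : (⋃ i ∈ T, s i).ncard ≤ T.ncard * m := by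
  rw [← hT.coe_toFinset, Set.ncard_coe_finset]
  simp only [Finset.mem_coe]
  refine (hT.toFinset.set_ncard_biUnion_le s).trans ?_
  exact Finset.sum_le_card_nsmul _ _ _ fun i hi => hm i (hT.mem_toFinset.mp hi)

section Points

variable {F V : Type*} [Field F] [AddCommGroup V] [Module F V]

def pts (W : Submodule F V) : Set (ℙ F V) := {p | p.submodule ≤ W}

@[simp] lemma mem_pts {W : Submodule F V} {p : ℙ F V} : p ∈ pts W ↔ p.submodule ≤ W := Iff.rfl

lemma mk_mem_pts {W : Submodule F V} {v : V} (hv : v ≠ 0) : mk F v hv ∈ pts W ↔ v ∈ W := by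
  rw [mem_pts, submodule_mk, span_singleton_le_iff_mem]

lemma rep_mem_iff_mem_pts {W : Submodule F V} {p : ℙ F V} : p.rep ∈ W ↔ p ∈ pts W := by
  rw [mem_pts, p.submodule_eq, span_singleton_le_iff_mem]

lemma pts_subset_pts_iff {W W' : Submodule F V} : pts W ⊆ pts W' ↔ W ≤ W' := by
  refine ⟨fun h v hv => ?_, fun h _ hp => hp.trans h⟩
  rcases eq_or_ne v 0 with rfl | hv0
  · exact W'.zero_mem
  · exact (mk_mem_pts hv0).mp (h ((mk_mem_pts hv0).mpr hv))

lemma pts_inf (W W' : Submodule F V) : pts (W ⊓ W') = pts W ∩ pts W' := by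
  ext p; simp

lemma submodule_inf_eq_bot {p p' : ℙ F V} (h : p ≠ p') : p.submodule ⊓ p'.submodule = ⊥ := by
  rw [← disjoint_iff, p'.submodule_eq, disjoint_span_singleton]
  intro hp'
  rw [p.submodule_eq] at hp'
  obtain ⟨a, ha⟩ := mem_span_singleton.mp hp'
  refine absurd ?_ h.symm
  rw [← p.mk_rep, ← p'.mk_rep, mk_eq_mk_iff']
  exact ⟨a, ha⟩

lemma ncard_pts_of_finrank_eq_two [Finite F] {L : Submodule F V} (hL : finrank F L = 2) :
    (pts L).ncard = Nat.card F + 1 := by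
  have hrange : pts L = Set.range (Projectivization.map L.subtype L.subtype_injective) := by
    ext p
    refine ⟨fun hp => ⟨mk F ⟨p.rep, rep_mem_iff_mem_pts.mpr hp⟩ ?_, ?_⟩, ?_⟩
    · exact fun h => p.rep_nonzero (congrArg Subtype.val h)
    · rw [map_mk]; exact p.mk_rep
    · rintro ⟨x, rfl⟩
      induction x using Projectivization.ind with
      | h v hv => rw [map_mk, mk_mem_pts]; exact v.2
  rw [hrange, Set.ncard_range_of_injective (map_injective _ _), card_of_finrank_two F L hL]

lemma finrank_submodule_sup_submodule {p p' : ℙ F V} (h : p ≠ p') :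
    finrank F ↥(p.submodule ⊔ p'.submodule) = 2 := by
  have := finrank_sup_add_finrank_inf_eq p.submodule p'.submodule
  rwa [submodule_inf_eq_bot h, finrank_bot, p.finrank_submodule, p'.finrank_submodule] at this

variable [FiniteDimensional F V]

lemma finrank_sup_submodule_of_notMem {W : Submodule F V} {p : ℙ F V} (hp : p ∉ pts W) :
    finrank F ↥(W ⊔ p.submodule) = finrank F W + 1 := by
  have hinf : W ⊓ p.submodule = ⊥ := by
    rw [← disjoint_iff, p.submodule_eq, disjoint_span_singleton' p.rep_nonzero, rep_mem_iff_mem_pts]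
    exact hp
  have := finrank_sup_add_finrank_inf_eq W p.submodule
  rwa [hinf, finrank_bot, add_zero, p.finrank_submodule] at this

lemma eq_sup_of_mem_pts {L : Submodule F V} (hL : finrank F L = 2) {p p' : ℙ F V} (h : p ≠ p')
    (hp : p ∈ pts L) (hp' : p' ∈ pts L) : L = p.submodule ⊔ p'.submodule :=
  (eq_of_le_of_finrank_eq (sup_le hp hp') (by rw [finrank_submodule_sup_submodule h, hL])).symm

lemma eq_of_mem_pts_of_mem_pts {L L' : Submodule F V} (hL : finrank F L = 2)
    (hL' : finrank F L' = 2) {p p' : ℙ F V} (h : p ≠ p') (hp : p ∈ pts L) (hp' : p' ∈ pts L)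
    (hpL' : p ∈ pts L') (hp'L' : p' ∈ pts L') : L = L' :=
  (eq_sup_of_mem_pts hL h hp hp').trans (eq_sup_of_mem_pts hL' h hpL' hp'L').symm

lemma ncard_pts_inter_le_one {L L' : Submodule F V} (hL : finrank F L = 2)
    (hL' : finrank F L' = 2) (hne : L ≠ L') : (pts L ∩ pts L').ncard ≤ 1 := by
  have hsub : (pts L ∩ pts L').Subsingleton := fun p hp p' hp' => by
    by_contra h
    exact hne (eq_of_mem_pts_of_mem_pts hL hL' h hp.1 hp'.1 hp.2 hp'.2)
  exact (Set.ncard_le_one hsub.finite).mpr hsub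

lemma pts_eq_singleton_of_finrank_eq_one {X : Submodule F V} (hX : finrank F X = 1) :
    pts X = {mk'' X hX} := by
  ext p
  rw [mem_pts, Set.mem_singleton_iff]
  refine ⟨fun hle => submodule_injective ?_, by rintro rfl; rw [submodule_mk'']⟩
  rw [submodule_mk'']
  exact eq_of_le_of_finrank_le hle (by rw [hX, p.finrank_submodule])

lemma exists_pts_inter_eq_singleton {L U : Submodule F V} (hL : finrank F L = 2)
    (hU : finrank F U + 1 = finrank F V) (hLU : ¬ L ≤ U) : ∃ x, pts L ∩ pts U = {x} := by
  have hlt : finrank F U < finrank F ↥(L ⊔ U) :=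
    finrank_lt_finrank_of_lt (lt_of_le_of_ne le_sup_right fun h => hLU (h ▸ le_sup_left))
  have hsup : finrank F ↥(L ⊔ U) ≤ finrank F V := finrank_le _
  have hinf : finrank F ↥(L ⊓ U) = 1 := by
    have := finrank_sup_add_finrank_inf_eq L U
    omega
  exact ⟨_, (pts_inf L U).symm.trans (pts_eq_singleton_of_finrank_eq_one hinf)⟩

lemma finrank_sup_eq_three {L L' : Submodule F V} (hL : finrank F L = 2)
    (hL' : finrank F L' = 2) (hne : L ≠ L') {p : ℙ F V} (hp : p ∈ pts L) (hp' : p ∈ pts L') :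
    finrank F ↥(L ⊔ L') = 3 := by
  have hinf : finrank F ↥(L ⊓ L') = 1 := by
    have hle : finrank F ↥(L ⊓ L') ≤ 2 := hL ▸ finrank_mono inf_le_left
    have hge : 1 ≤ finrank F ↥(L ⊓ L') := p.finrank_submodule ▸ finrank_mono (le_inf hp hp')
    have hne2 : finrank F ↥(L ⊓ L') ≠ 2 := fun h2 => hne <|
      (eq_of_le_of_finrank_eq inf_le_left (h2.trans hL.symm)).symm.trans
        (eq_of_le_of_finrank_eq inf_le_right (h2.trans hL'.symm))
    omega
  have := finrank_sup_add_finrank_inf_eq L L'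
  omega

end Points

section Pencil

variable {F V : Type*} [Field F] [AddCommGroup V] [Module F V] (W : Submodule F V)

/-- The subspaces containing `W` as a hyperplane, indexed by the points of `ℙ F (V ⧸ W)`: for a
plane `W` of `PG(4, q)`, the `q + 1` solids through it. -/
def pencil (x : ℙ F (V ⧸ W)) : Submodule F V := x.submodule.comap W.mkQ

lemma le_pencil (x : ℙ F (V ⧸ W)) : W ≤ pencil W x := fun v hv => by
  simp [pencil, (Submodule.Quotient.mk_eq_zero W).mpr hv]

lemma pencil_inf_pencil {x y : ℙ F (V ⧸ W)} (h : x ≠ y) : pencil W x ⊓ pencil W y = W := by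
  rw [pencil, pencil, ← comap_inf, submodule_inf_eq_bot h, comap_bot, ker_mkQ]

lemma exists_mem_pts_pencil (hW : W ≠ ⊤) (p : ℙ F V) : ∃ x, p ∈ pts (pencil W x) := by
  have := Submodule.Quotient.nontrivial_iff.mpr hW
  by_cases h : W.mkQ p.rep = 0
  · obtain ⟨x⟩ := (inferInstance : Nonempty (ℙ F (V ⧸ W)))
    exact ⟨x, rep_mem_iff_mem_pts.mp (by simp [pencil, h])⟩
  · refine ⟨mk F _ h, rep_mem_iff_mem_pts.mp ?_⟩
    rw [pencil, mem_comap, submodule_mk]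
    exact mem_span_singleton_self _

variable [FiniteDimensional F V]

lemma finrank_pencil (x : ℙ F (V ⧸ W)) : finrank F (pencil W x) = finrank F W + 1 := by
  obtain ⟨v, hv⟩ := W.mkQ_surjective x.rep
  have hv0 : v ≠ 0 := by rintro rfl; exact x.rep_nonzero (by simp [← hv])
  have hvW : mk F v hv0 ∉ pts W := by
    rw [mk_mem_pts, ← Submodule.Quotient.mk_eq_zero W]
    exact fun h => x.rep_nonzero (by rw [← hv, mkQ_apply, h])
  have hpencil : pencil W x = W ⊔ (mk F v hv0).submodule := by
    rw [pencil, x.submodule_eq, ← hv, submodule_mk, ← Set.image_singleton, ← map_span,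
      comap_map_mkQ]
  rw [hpencil, finrank_sup_submodule_of_notMem hvW]

lemma exists_le_finrank_eq_succ (hW : W ≠ ⊤) :
    ∃ W', W ≤ W' ∧ finrank F W' = finrank F W + 1 := by
  have := Submodule.Quotient.nontrivial_iff.mpr hW
  obtain ⟨x⟩ := (inferInstance : Nonempty (ℙ F (V ⧸ W)))
  exact ⟨pencil W x, le_pencil W x, finrank_pencil W x⟩

lemma card_pencil_index [Finite F] (hW : finrank F W + 2 = finrank F V) :
    Nat.card (ℙ F (V ⧸ W)) = Nat.card F + 1 := by
  apply card_of_finrank_two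
  have := W.finrank_quotient_add_finrank
  omega

lemma ncard_le_of_forall_pencil [Finite F] (S : Set (ℙ F V)) (hW : W ≠ ⊤) {m : ℕ}
    (hm : ∀ x, (S ∩ pts (pencil W x)).ncard ≤ (S ∩ pts W).ncard + m) :
    S.ncard ≤ (S ∩ pts W).ncard + Nat.card (ℙ F (V ⧸ W)) * m := by
  have := Module.finite_of_finite F (M := V)
  have : Finite (V ⧸ W) := Module.finite_of_finite F
  have hcover : S ⊆ (S ∩ pts W) ∪ ⋃ x ∈ Set.univ, (S ∩ pts (pencil W x)) \ pts W := by
    intro p hp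
    by_cases hpW : p ∈ pts W
    · exact Or.inl ⟨hp, hpW⟩
    · obtain ⟨x, hx⟩ := exists_mem_pts_pencil W hW p
      exact Or.inr (Set.mem_biUnion (Set.mem_univ x) ⟨⟨hp, hx⟩, hpW⟩)
  have hpiece : ∀ x ∈ Set.univ, ((S ∩ pts (pencil W x)) \ pts W).ncard ≤ m := fun x _ => by
    have hsub : S ∩ pts W ⊆ S ∩ pts (pencil W x) :=
      Set.inter_subset_inter_right _ (pts_subset_pts_iff.mpr (le_pencil W x))
    have hdiff : (S ∩ pts (pencil W x)) \ pts W = (S ∩ pts (pencil W x)) \ (S ∩ pts W) :=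
      Set.ext fun p => by simp only [Set.mem_sdiff, Set.mem_inter_iff]; tauto
    rw [hdiff, Set.ncard_sdiff hsub]
    have := hm x
    omega
  calc S.ncard ≤ _ := Set.ncard_le_ncard hcover
    _ ≤ _ := Set.ncard_union_le _ _
    _ ≤ _ := Nat.add_le_add_left (ncard_biUnion_le_mul Set.finite_univ _ hpiece) _
    _ = _ := by rw [Set.ncard_univ]

end Pencil

section TwistedCubic

variable {F V : Type*} [Field F] [AddCommGroup V] [Module F V]

def cubicVec (a b : F) : Fin 4 → F := ![a ^ 3, a ^ 2 * b, a * b ^ 2, b ^ 3]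

lemma cubicVec_smul (t a b : F) : cubicVec (t * a) (t * b) = t ^ 3 • cubicVec a b := by
  funext i; fin_cases i <;> simp [cubicVec] <;> ring

lemma cubicVec_ne_zero {a b : F} (hab : a ≠ 0 ∨ b ≠ 0) : cubicVec a b ≠ 0 := by
  intro h
  rcases hab with ha | hb
  · exact ha (pow_eq_zero_iff three_ne_zero |>.mp (by simpa [cubicVec] using congrFun h 0))
  · exact hb (pow_eq_zero_iff three_ne_zero |>.mp (by simpa [cubicVec] using congrFun h 3))

lemma exists_eq_mul_of_mul_eq_mul {a b a' b' : F} (hab : a ≠ 0 ∨ b ≠ 0) (h : a * b' = a' * b) :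
    ∃ t, a' = t * a ∧ b' = t * b := by
  rcases hab with ha | hb
  · exact ⟨a' / a, by field_simp, by field_simp; linear_combination h⟩
  · exact ⟨b' / b, by field_simp; linear_combination -h, by field_simp⟩

/-- The cubic form `(b_j x - a_j y)² (b_k x - a_k y)` vanishes at the parameters `j` and `k`,
so pairing it with a linear relation among the `cubicVec (a l) (b l)` isolates the third
coefficient. -/
lemma sum_mul_cubic_form_eq_zero {g a b : Fin 3 → F}
    (hg : ∑ l, g l • cubicVec (a l) (b l) = 0) (j k : Fin 3) :
    ∑ l, g l * ((b j * a l - a j * b l) ^ 2 * (b k * a l - a k * b l)) = 0 := by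
  have hm : ∀ m, ∑ l, g l * cubicVec (a l) (b l) m = 0 := fun m => by
    simpa using congrFun hg m
  have h0 := hm 0; have h1 := hm 1; have h2 := hm 2; have h3 := hm 3
  simp only [Fin.sum_univ_three, cubicVec] at h0 h1 h2 h3 ⊢
  simp only [Matrix.cons_val] at h0 h1 h2 h3
  linear_combination (b j ^ 2 * b k) * h0 - (2 * a j * b j * b k + b j ^ 2 * a k) * h1 +
    (a j ^ 2 * b k + 2 * a j * b j * a k) * h2 - (a j ^ 2 * a k) * h3

lemma linearIndependent_cubicVec {a b : Fin 3 → F} (h : ∀ i j, i ≠ j → a i * b j ≠ a j * b i) :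
    LinearIndependent F fun i => cubicVec (a i) (b i) := by
  rw [Fintype.linearIndependent_iff]
  intro g hg i
  have hsum := sum_mul_cubic_form_eq_zero hg (i + 1) (i + 2)
  rw [Finset.sum_eq_single i] at hsum
  · have hi1 : i + 1 ≠ i := by fin_cases i <;> decide
    have hi2 : i + 2 ≠ i := by fin_cases i <;> decide
    refine (mul_eq_zero.mp hsum).resolve_right (mul_ne_zero (pow_ne_zero _ ?_) ?_)
    · exact sub_ne_zero.mpr fun e => h _ _ hi1 (by linear_combination -e)
    · exact sub_ne_zero.mpr fun e => h _ _ hi2 (by linear_combination -e)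
  · intro l _ hl
    have hcases : ∀ i l : Fin 3, l ≠ i → l = i + 1 ∨ l = i + 2 := by decide
    rcases hcases i l hl with rfl | rfl <;> ring
  · simp

/-- `IsTwistedCubic F n C` says that `C = twistedCubic f` for an injective `f`. -/
def twistedCubic (f : (Fin 4 → F) →ₗ[F] V) : Set (ℙ F V) :=
  {p | ∃ a b : F, (a ≠ 0 ∨ b ≠ 0) ∧ p.submodule = span F {f (cubicVec a b)}}

variable {f : (Fin 4 → F) →ₗ[F] V}

lemma mul_ne_mul_of_twistedCubic {p p' : ℙ F V} {a b a' b' : F} (hab : a ≠ 0 ∨ b ≠ 0)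
    (hab' : a' ≠ 0 ∨ b' ≠ 0) (hp : p.submodule = span F {f (cubicVec a b)})
    (hp' : p'.submodule = span F {f (cubicVec a' b')}) (hne : p ≠ p') : a * b' ≠ a' * b := by
  intro h
  obtain ⟨t, rfl, rfl⟩ := exists_eq_mul_of_mul_eq_mul hab h
  have ht : t ≠ 0 := by rintro rfl; simp at hab'
  refine hne (submodule_injective ?_)
  rw [hp, hp', cubicVec_smul, map_smul, span_singleton_smul_eq (IsUnit.mk0 _ (pow_ne_zero 3 ht))]

lemma ncard_twistedCubic_inter_pts_le_two [FiniteDimensional F V] (hf : Function.Injective f)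
    {L : Submodule F V} (hL : finrank F L = 2) : (twistedCubic f ∩ pts L).ncard ≤ 2 := by
  by_contra! hlt
  obtain ⟨x, ⟨⟨a₀, b₀, h₀, hx⟩, hxL⟩, y, ⟨⟨a₁, b₁, h₁, hy⟩, hyL⟩, z, ⟨⟨a₂, b₂, h₂, hz⟩, hzL⟩,
    hxy, hxz, hyz⟩ := (Set.two_lt_ncard (Set.finite_of_ncard_pos (by omega))).mp hlt
  set a := ![a₀, a₁, a₂]
  set b := ![b₀, b₁, b₂]
  have hab : ∀ i j, i ≠ j → a i * b j ≠ a j * b i := by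
    have h01 := mul_ne_mul_of_twistedCubic h₀ h₁ hx hy hxy
    have h02 := mul_ne_mul_of_twistedCubic h₀ h₂ hx hz hxz
    have h12 := mul_ne_mul_of_twistedCubic h₁ h₂ hy hz hyz
    intro i j hij
    fin_cases i <;> fin_cases j <;> simp_all [a, b, eq_comm]
  have hli := (linearIndependent_cubicVec hab).map' f (LinearMap.ker_eq_bot.mpr hf)
  have hspan : span F (Set.range (f ∘ fun i => cubicVec (a i) (b i))) ≤ L := by
    rw [span_le, Set.range_subset_iff]
    intro i
    fin_cases i
    · exact (span_singleton_le_iff_mem _ _).mp (hx ▸ hxL)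
    · exact (span_singleton_le_iff_mem _ _).mp (hy ▸ hyL)
    · exact (span_singleton_le_iff_mem _ _).mp (hz ▸ hzL)
  have := finrank_mono hspan
  rw [finrank_span_eq_card hli, Fintype.card_fin, hL] at this
  omega

lemma ncard_twistedCubic_le [Finite F] [FiniteDimensional F V] (hf : Function.Injective f) :
    (twistedCubic f).ncard ≤ Nat.card F + 1 := by
  have := Module.finite_of_finite F (M := V)
  have hne : ∀ v : {v : Fin 2 → F // v ≠ 0}, f (cubicVec (v.1 0) (v.1 1)) ≠ 0 := fun v => by
    rw [ne_eq, map_eq_zero_iff f hf]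
    refine cubicVec_ne_zero ?_
    by_contra! h
    exact v.2 (funext fun i => by fin_cases i <;> simp [h])
  let φ : ℙ F (Fin 2 → F) → ℙ F V := Projectivization.lift (fun v => mk F _ (hne v))
    fun v w t hvw => (mk_eq_mk_iff' _ _ _ _ _).mpr ⟨t ^ 3, by
      simp only [hvw, Pi.smul_apply, smul_eq_mul, cubicVec_smul, map_smul]⟩
  have hsub : twistedCubic f ⊆ Set.range φ := by
    rintro p ⟨a, b, hab, hp⟩
    have hv : ![a, b] ≠ 0 := fun h => by
      rcases hab with ha | hb
      · exact ha (by simpa using congrFun h 0)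
      · exact hb (by simpa using congrFun h 1)
    refine ⟨mk F ![a, b] hv, submodule_injective ?_⟩
    simp [φ, submodule_mk, hp]
  calc (twistedCubic f).ncard ≤ (Set.range φ).ncard := Set.ncard_le_ncard hsub
    _ ≤ Nat.card (ℙ F (Fin 2 → F)) := by
      rw [← Set.image_univ, ← Set.ncard_univ]; exact Set.ncard_image_le
    _ = Nat.card F + 1 := card_of_finrank_two F _ (by simp)

end TwistedCubic

section Lines

variable {F V : Type*} [Field F] [AddCommGroup V] [Module F V]

def lines (K : Set (ℙ F V)) : Set (Submodule F V) := {L | finrank F L = 2 ∧ pts L ⊆ K}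

def linesThrough (K : Set (ℙ F V)) (p : ℙ F V) : Set (Submodule F V) :=
  {L | L ∈ lines K ∧ p ∈ pts L}

def cone (K : Set (ℙ F V)) (p : ℙ F V) : Set (ℙ F V) := ⋃ L ∈ linesThrough K p, pts L

variable {K : Set (ℙ F V)}

lemma cone_subset {p : ℙ F V} : cone K p ⊆ K := fun _ hx => by
  obtain ⟨L, hL, hxL⟩ := Set.mem_iUnion₂.mp hx
  exact hL.1.2 hxL

lemma exists_lines_of_eq_union {W L M N : Submodule F V} (hL : finrank F L = 2)
    (hM : finrank F M = 2) (hN : finrank F N = 2) (h : K ∩ pts W = pts L ∪ pts M ∪ pts N) :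
    ∃ T ⊆ lines K, T.ncard ≤ 3 ∧ K ∩ pts W = ⋃ L ∈ T, pts L := by
  have hK : pts L ∪ pts M ∪ pts N ⊆ K := h ▸ Set.inter_subset_left
  refine ⟨{L, M, N}, ?_, ?_, ?_⟩
  · rintro X (rfl | rfl | rfl)
    exacts [⟨hL, fun x hx => hK (.inl (.inl hx))⟩, ⟨hM, fun x hx => hK (.inl (.inr hx))⟩,
      ⟨hN, fun x hx => hK (.inr hx)⟩]
  · exact (Set.ncard_insert_le _ _).trans (by grw [Set.ncard_insert_le, Set.ncard_singleton])
  · simp [h, Set.union_assoc]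

lemma ncard_inter_pts_eq_of_cone_eq [FiniteDimensional F V] {p : ℙ F V} (hK : cone K p = K)
    {U : Submodule F V} (hU : finrank F U + 1 = finrank F V) (hpU : p ∉ pts U) :
    (K ∩ pts U).ncard = (linesThrough K p).ncard := by
  have hpt : ∀ L ∈ linesThrough K p, ∃ x, pts L ∩ pts U = {x} := fun L hL =>
    exists_pts_inter_eq_singleton hL.1.1 hU fun hLU => hpU (hL.2.trans hLU)
  have : Nonempty (ℙ F V) := ⟨p⟩
  choose! g hg using hpt
  have hgmem : ∀ L ∈ linesThrough K p, g L ∈ pts L ∩ pts U := fun L hL => (hg L hL).symm ▸ rfl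
  have himage : g '' linesThrough K p = K ∩ pts U := by
    ext x
    constructor
    · rintro ⟨L, hL, rfl⟩
      exact ⟨hL.1.2 (hgmem L hL).1, (hgmem L hL).2⟩
    · rintro ⟨hxK, hxU⟩
      rw [← hK] at hxK
      obtain ⟨L, hL, hxL⟩ := Set.mem_iUnion₂.mp hxK
      have hx : x ∈ pts L ∩ pts U := ⟨hxL, hxU⟩
      rw [hg L hL] at hx
      exact ⟨L, hL, hx.symm⟩
  have hinj : Set.InjOn g (linesThrough K p) := fun L hL L' hL' hLL' => by
    have hpg : p ≠ g L := fun e => hpU (e ▸ (hgmem L hL).2)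
    exact eq_of_mem_pts_of_mem_pts hL.1.1 hL'.1.1 hpg hL.2 (hgmem L hL).1 hL'.2
      (hLL' ▸ (hgmem L' hL').1)
  rw [← himage, hinj.ncard_image]

variable [Fintype F] {q : ℕ}

lemma ncard_pts_eq_add_one (hq : Fintype.card F = q) {L : Submodule F V} (hL : finrank F L = 2) :
    (pts L).ncard = q + 1 := by
  rw [ncard_pts_of_finrank_eq_two hL, Nat.card_eq_fintype_card, hq]

variable [Finite V]

instance : Finite (Submodule F V) := Finite.of_injective _ SetLike.coe_injective

lemma two_mul_add_one_le_ncard_pts_union (hq : Fintype.card F = q) {L L' : Submodule F V}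
    (hL : finrank F L = 2) (hL' : finrank F L' = 2) (hne : L ≠ L') :
    2 * q + 1 ≤ (pts L ∪ pts L').ncard := by
  have := Set.ncard_inter_add_ncard_union (pts L) (pts L')
  have := ncard_pts_inter_le_one hL hL' hne
  rw [ncard_pts_eq_add_one hq hL, ncard_pts_eq_add_one hq hL'] at *
  omega

lemma ncard_biUnion_pts_le_or_le (hq : Fintype.card F = q) {T : Set (Submodule F V)}
    (hT : ∀ L ∈ T, finrank F L = 2) :
    (⋃ L ∈ T, pts L).ncard ≤ q + 1 ∨ 2 * q + 1 ≤ (⋃ L ∈ T, pts L).ncard := by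
  rcases le_or_gt T.ncard 1 with hT1 | hT1
  · have := ncard_biUnion_le_mul (Set.toFinite T) pts fun L hL =>
      (ncard_pts_eq_add_one hq (hT L hL)).le
    exact .inl (by nlinarith)
  · obtain ⟨M, hM, M', hM', hMM'⟩ := (Set.one_lt_ncard (Set.toFinite T)).mp hT1
    have hsub : pts M ∪ pts M' ⊆ ⋃ L ∈ T, pts L :=
      Set.union_subset (Set.subset_biUnion_of_mem hM) (Set.subset_biUnion_of_mem hM')
    exact .inr ((two_mul_add_one_le_ncard_pts_union hq (hT M hM) (hT M' hM') hMM').trans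
      (Set.ncard_le_ncard hsub))

lemma mem_of_pts_subset_biUnion (hq : Fintype.card F = q) {L : Submodule F V}
    (hL : finrank F L = 2) {T : Set (Submodule F V)} (hT : ∀ M ∈ T, finrank F M = 2)
    (hTq : T.ncard ≤ q) (hsub : pts L ⊆ ⋃ M ∈ T, pts M) : L ∈ T := by
  by_contra hLT
  have hcover : pts L ⊆ ⋃ M ∈ T, pts L ∩ pts M := fun x hx => by
    obtain ⟨M, hM, hxM⟩ := Set.mem_iUnion₂.mp (hsub hx)
    exact Set.mem_biUnion hM ⟨hx, hxM⟩
  have := (Set.ncard_le_ncard hcover).trans <| ncard_biUnion_le_mul (Set.toFinite T) _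
    fun M hM => ncard_pts_inter_le_one hL (hT M hM) fun h => hLT (h ▸ hM)
  rw [ncard_pts_eq_add_one hq hL] at this
  omega

lemma ncard_cone (hq : Fintype.card F = q) {p : ℙ F V} (hne : (linesThrough K p).Nonempty) :
    (cone K p).ncard = 1 + (linesThrough K p).ncard * q := by
  have hcone : cone K p = insert p (⋃ L ∈ linesThrough K p, pts L \ {p}) := by
    ext x
    by_cases hx : x = p
    · obtain ⟨L, hL⟩ := hne
      simpa [hx, cone] using ⟨L, hL, hL.2⟩
    · simp [cone, hx]
  have hdisj : (linesThrough K p).PairwiseDisjoint fun L => pts L \ {p} := by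
    intro L hL L' hL' hne
    refine Set.disjoint_left.mpr fun x hx hx' => hne ?_
    exact eq_of_mem_pts_of_mem_pts hL.1.1 hL'.1.1 hx.2 hx.1 hL.2 hx'.1 hL'.2
  have hpiece : ∀ L ∈ linesThrough K p, (pts L \ {p}).ncard = q := fun L hL => by
    rw [Set.ncard_sdiff_singleton_of_mem hL.2, ncard_pts_eq_add_one hq hL.1.1, Nat.add_sub_cancel]
  rw [hcone, Set.ncard_insert_of_notMem (by simp), add_comm,
    (Set.toFinite _).ncard_biUnion (fun _ _ => Set.toFinite _) hdisj,
    finsum_mem_congr rfl hpiece, ← finsum_one, finsum_mem_mul]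
  simp

end Lines

section Configuration

variable {F V : Type*} [Field F] [Fintype F] [AddCommGroup V] [Module F V]

/-- What the hypotheses of the theorem say about `K` once `K` contains no conic: every solid
section is a union of at most three lines of `K`, or (the twisted cubic case) has at most
`q + 1` points and contains no line of `K`. -/
structure SolidSections (q : ℕ) (K : Set (ℙ F V)) : Prop where
  card_eq : Fintype.card F = q
  three_le : 3 ≤ q
  finrank_eq : finrank F V = 5
  ncard_eq : K.ncard = q ^ 2 + 2 * q + 1
  cases (W : Submodule F V) : finrank F W = 4 →
    (∃ T ⊆ lines K, T.ncard ≤ 3 ∧ K ∩ pts W = ⋃ L ∈ T, pts L) ∨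
      ((K ∩ pts W).ncard ≤ q + 1 ∧ ∀ L ∈ lines K, ¬ L ≤ W)

namespace SolidSections

variable {q : ℕ} {K : Set (ℙ F V)}

lemma ne_top (h : SolidSections q K) {W : Submodule F V} (hW : finrank F W < 5) : W ≠ ⊤ := by
  rintro rfl
  rw [finrank_top, h.finrank_eq] at hW
  exact lt_irrefl _ hW

lemma exists_lines_of_le (h : SolidSections q K) {W L : Submodule F V} (hW : finrank F W = 4)
    (hL : L ∈ lines K) (hLW : L ≤ W) :
    ∃ T ⊆ lines K, T.ncard ≤ 3 ∧ (∀ M ∈ T, M ≤ W) ∧ K ∩ pts W = ⋃ M ∈ T, pts M := by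
  rcases h.cases W hW with ⟨T, hTK, hT3, hKW⟩ | ⟨-, hno⟩
  · refine ⟨T, hTK, hT3, fun M hM => pts_subset_pts_iff.mp fun x hx => ?_, hKW⟩
    exact (hKW.symm ▸ Set.mem_biUnion hM hx : x ∈ K ∩ pts W).2
  · exact absurd hLW (hno L hL)

variable [Finite V]

lemma card_pencil (h : SolidSections q K) {π : Submodule F V} (hπ : finrank F π = 3) :
    Nat.card (ℙ F (V ⧸ π)) = q + 1 := by
  rw [card_pencil_index π (by rw [hπ, h.finrank_eq]), Nat.card_eq_fintype_card, h.card_eq]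

lemma mem_of_pts_subset (h : SolidSections q K) {L : Submodule F V} (hL : L ∈ lines K)
    {T : Set (Submodule F V)} (hTK : T ⊆ lines K) (hT3 : T.ncard ≤ 3)
    (hsub : pts L ⊆ ⋃ M ∈ T, pts M) : L ∈ T :=
  mem_of_pts_subset_biUnion h.card_eq hL.1 (fun _ hM => (hTK hM).1) (hT3.trans h.three_le) hsub

lemma lines_nonempty (h : SolidSections q K) : (lines K).Nonempty := by
  by_contra hno
  have hsmall : ∀ W : Submodule F V, finrank F W = 4 → (K ∩ pts W).ncard ≤ q + 1 := by
    intro W hW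
    rcases h.cases W hW with ⟨T, hTK, -, hKW⟩ | ⟨hle, -⟩
    · rw [Set.not_nonempty_iff_eq_empty.mp hno, Set.subset_empty_iff] at hTK
      simp [hKW, hTK]
    · exact hle
  obtain ⟨p₁, hp₁, p₂, hp₂, hne⟩ := (Set.one_lt_ncard (Set.toFinite K)).mp
    (by rw [h.ncard_eq]; nlinarith [h.three_le])
  have h2 := finrank_submodule_sup_submodule hne
  obtain ⟨π, hπle, hπ⟩ := exists_le_finrank_eq_succ (p₁.submodule ⊔ p₂.submodule)
    (h.ne_top (by omega))
  rw [h2] at hπ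
  have hU : ∀ x, finrank F (pencil π x) = 4 := fun x => by rw [finrank_pencil, hπ]
  have hy : 2 ≤ (K ∩ pts π).ncard := by
    rw [← Set.ncard_pair hne]
    refine Set.ncard_le_ncard fun x hx => ?_
    rcases hx with rfl | rfl
    exacts [⟨hp₁, le_sup_left.trans hπle⟩, ⟨hp₂, le_sup_right.trans hπle⟩]
  have hy' : (K ∩ pts π).ncard ≤ q + 1 := by
    obtain ⟨x, -⟩ := exists_mem_pts_pencil π (h.ne_top (by omega)) p₁
    exact (Set.ncard_le_ncard (Set.inter_subset_inter_right _
      (pts_subset_pts_iff.mpr (le_pencil π x)))).trans (hsmall _ (hU x))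
  have := ncard_le_of_forall_pencil π K (h.ne_top (by omega)) (m := q + 1 - (K ∩ pts π).ncard)
    fun x => by have := hsmall _ (hU x); omega
  rw [h.card_pencil hπ, h.ncard_eq] at this
  obtain ⟨m, hm⟩ : ∃ m, q + 1 = (K ∩ pts π).ncard + m := ⟨_, (Nat.add_sub_of_le hy').symm⟩
  rw [hm, Nat.add_sub_cancel_left] at this
  -- `|K| ≤ y + (q + 1) (q + 1 - y) < (q + 1) ^ 2` for `y = |K ∩ π| ≥ 2`
  nlinarith

lemma linesThrough_nonempty (h : SolidSections q K) {p : ℙ F V} (hp : p ∈ K) :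
    (linesThrough K p).Nonempty := by
  obtain ⟨L, hL⟩ := h.lines_nonempty
  by_cases hpL : p ∈ pts L
  · exact ⟨L, hL, hpL⟩
  have hπ : finrank F ↥(L ⊔ p.submodule) = 3 := by rw [finrank_sup_submodule_of_notMem hpL, hL.1]
  obtain ⟨W, hπW, hW⟩ := exists_le_finrank_eq_succ (L ⊔ p.submodule) (h.ne_top (by omega))
  rw [hπ] at hW
  obtain ⟨T, hTK, -, -, hKW⟩ := h.exists_lines_of_le hW hL (le_sup_left.trans hπW)
  have hpW : p ∈ K ∩ pts W := ⟨hp, le_sup_right.trans hπW⟩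
  rw [hKW] at hpW
  obtain ⟨M, hM, hpM⟩ := Set.mem_iUnion₂.mp hpW
  exact ⟨M, hTK hM, hpM⟩

lemma false_of_coplanar (h : SolidSections q K) {π L₁ L₂ L₃ : Submodule F V}
    (hπ : finrank F π = 3) (h₁ : L₁ ∈ lines K) (h₂ : L₂ ∈ lines K) (h₃ : L₃ ∈ lines K)
    (h₁₂ : L₁ ≠ L₂) (h₁₃ : L₁ ≠ L₃) (h₂₃ : L₂ ≠ L₃) (hL₁ : L₁ ≤ π) (hL₂ : L₂ ≤ π)
    (hL₃ : L₃ ≤ π) : False := by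
  have hsection : ∀ x, K ∩ pts (pencil π x) = ⋃ L ∈ ({L₁, L₂, L₃} : Set _), pts L := by
    intro x
    obtain ⟨T, hTK, hT3, -, hKW⟩ :=
      h.exists_lines_of_le (by rw [finrank_pencil, hπ]) h₁ (hL₁.trans (le_pencil π x))
    have hmem : ∀ L ∈ lines K, L ≤ π → L ∈ T := fun L hL hLπ =>
      h.mem_of_pts_subset hL hTK hT3 <| hKW ▸ fun y hy =>
        ⟨hL.2 hy, pts_subset_pts_iff.mpr (hLπ.trans (le_pencil π x)) hy⟩
    have hsub : ({L₁, L₂, L₃} : Set _) ⊆ T := by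
      rintro L (rfl | rfl | rfl)
      exacts [hmem _ h₁ hL₁, hmem _ h₂ hL₂, hmem _ h₃ hL₃]
    have h3 : ({L₁, L₂, L₃} : Set _).ncard = 3 :=
      Set.ncard_eq_three.mpr ⟨_, _, _, h₁₂, h₁₃, h₂₃, rfl⟩
    rw [hKW, Set.eq_of_subset_of_ncard_le hsub (h3 ▸ hT3)]
  have hKsub : K ⊆ pts L₁ ∪ pts L₂ ∪ pts L₃ := by
    intro y hy
    obtain ⟨x, hx⟩ := exists_mem_pts_pencil π (h.ne_top (by omega)) y
    have hy' : y ∈ K ∩ pts (pencil π x) := ⟨hy, hx⟩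
    rw [hsection x] at hy'
    simpa [Set.union_assoc] using hy'
  have := (Set.ncard_le_ncard hKsub).trans
    ((Set.ncard_union_le _ _).trans (Nat.add_le_add_right (Set.ncard_union_le _ _) _))
  rw [h.ncard_eq, ncard_pts_eq_add_one h.card_eq h₁.1, ncard_pts_eq_add_one h.card_eq h₂.1,
    ncard_pts_eq_add_one h.card_eq h₃.1] at this
  nlinarith [h.three_le]

lemma exists_coplanar_line_or_le_ncard (h : SolidSections q K) {L : Submodule F V}
    (hL : L ∈ lines K) {p : ℙ F V} (hp : p ∈ K) (hpL : p ∉ pts L) :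
    (∃ M ∈ linesThrough K p, M ≤ L ⊔ p.submodule) ∨ q + 1 ≤ (linesThrough K p).ncard := by
  by_contra! hcon
  obtain ⟨hno, hlt⟩ := hcon
  have hπ : finrank F ↥(L ⊔ p.submodule) = 3 := by rw [finrank_sup_submodule_of_notMem hpL, hL.1]
  have hchoice : ∀ x, ∃ M ∈ linesThrough K p, M ≤ pencil (L ⊔ p.submodule) x := by
    intro x
    obtain ⟨T, hTK, -, hTW, hKW⟩ := h.exists_lines_of_le (by rw [finrank_pencil, hπ]) hL
      (le_sup_left.trans (le_pencil _ x))
    have hpW : p ∈ K ∩ pts (pencil (L ⊔ p.submodule) x) := ⟨hp, le_sup_right.trans (le_pencil _ x)⟩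
    rw [hKW] at hpW
    obtain ⟨M, hM, hpM⟩ := Set.mem_iUnion₂.mp hpW
    exact ⟨M, ⟨hTK hM, hpM⟩, hTW M hM⟩
  choose M hM hMle using hchoice
  have hinj : Function.Injective M := fun x y hxy => by
    by_contra hne
    exact hno _ (hM x) ((le_inf (hMle x) (hxy ▸ hMle y)).trans (pencil_inf_pencil _ hne).le)
  have := Set.ncard_le_ncard (Set.range_subset_iff.mpr hM)
  rw [Set.ncard_range_of_injective hinj, h.card_pencil hπ] at this
  omega

lemma ncard_linesThrough_le (h : SolidSections q K) (p : ℙ F V) :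
    (linesThrough K p).ncard ≤ q + 2 := by
  rcases (linesThrough K p).eq_empty_or_nonempty with h0 | hne
  · simp [h0]
  have hcone := Set.ncard_le_ncard (cone_subset (K := K) (p := p))
  rw [ncard_cone h.card_eq hne, h.ncard_eq] at hcone
  nlinarith [h.three_le]

lemma ncard_linesThrough_ne (h : SolidSections q K) (p : ℙ F V) :
    (linesThrough K p).ncard ≠ q + 2 := by
  -- `K` would be the cone over `p`, so a solid missing `p` would meet `K` in exactly one point
  -- of each line through `p`: `q + 2` points, which no allowed section has
  intro hn
  have hne : (linesThrough K p).Nonempty := Set.nonempty_of_ncard_ne_zero (by omega)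
  have hconeK : cone K p = K := Set.eq_of_subset_of_ncard_le cone_subset
    (by rw [ncard_cone h.card_eq hne, hn, h.ncard_eq]; ring_nf; rfl)
  obtain ⟨U, hU⟩ := p.submodule.exists_isCompl
  have hUr : finrank F U = 4 := by
    have := finrank_add_eq_of_isCompl hU
    rw [p.finrank_submodule, h.finrank_eq] at this
    omega
  have hpU : p ∉ pts U := fun hle => by
    have := p.finrank_submodule
    rw [hU.disjoint.eq_bot_of_le hle, finrank_bot] at this
    exact zero_ne_one this
  have hcard : (K ∩ pts U).ncard = q + 2 := by
    rw [ncard_inter_pts_eq_of_cone_eq hconeK (by rw [hUr, h.finrank_eq]) hpU, hn]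
  have h3 := h.three_le
  rcases h.cases U hUr with ⟨T, hTK, -, hKU⟩ | ⟨hle, -⟩
  · rw [hKU] at hcard
    rcases ncard_biUnion_pts_le_or_le h.card_eq fun L hL => (hTK hL).1 with hle | hge <;> omega
  · omega

lemma ncard_linesThrough_eq (h : SolidSections q K) {p : ℙ F V}
    (hp : q + 1 ≤ (linesThrough K p).ncard) : (linesThrough K p).ncard = q + 1 := by
  have := h.ncard_linesThrough_le p
  have := h.ncard_linesThrough_ne p
  omega

lemma le_ncard_linesThrough_of_notMem_cone (h : SolidSections q K) {p w : ℙ F V}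
    (hp : q + 1 ≤ (linesThrough K p).ncard) (hw : w ∈ K) (hwp : w ∉ cone K p) :
    q + 1 ≤ (linesThrough K w).ncard := by
  by_contra! hlt
  have hchoice : ∀ S ∈ linesThrough K p, ∃ N ∈ linesThrough K w, N ≤ S ⊔ w.submodule :=
    fun S hS => (h.exists_coplanar_line_or_le_ncard hS.1 hw
      fun hwS => hwp (Set.mem_biUnion hS hwS)).resolve_right (by omega)
  choose! N hN hNle using hchoice
  obtain ⟨S, hS, T, hT, hST, hNST⟩ := Set.exists_ne_map_eq_of_ncard_lt_of_maps_to
    (by rw [h.ncard_linesThrough_eq hp]; omega) hN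
  have hpN : p ∉ pts (N S) := fun hpN => hwp (Set.mem_biUnion ⟨(hN S hS).1, hpN⟩ (hN S hS).2)
  have hπ : finrank F ↥(N S ⊔ p.submodule) = 3 := by
    rw [finrank_sup_submodule_of_notMem hpN, (hN S hS).1.1]
  -- the plane through `w` and a line `R` of the cone of `p` is spanned by `N R` and `p`
  have hplane : ∀ R ∈ linesThrough K p, N R = N S → R ≤ N S ⊔ p.submodule := by
    intro R hR hRS
    have hwR : w ∉ pts R := fun hwR => hwp (Set.mem_biUnion hR hwR)
    have heq := eq_of_le_of_finrank_eq (sup_le (hRS ▸ hNle R hR) (hR.2.trans le_sup_left))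
      (by rw [hπ, finrank_sup_submodule_of_notMem hwR, hR.1.1])
    exact heq ▸ le_sup_left
  have hSN : ∀ R ∈ linesThrough K p, R ≠ N S := fun R hR e => hpN (e ▸ hR.2)
  exact h.false_of_coplanar hπ hS.1 hT.1 (hN S hS).1 hST (hSN S hS) (hSN T hT)
    (hplane S hS rfl) (hplane T hT hNST.symm) le_sup_left

lemma ncard_cone_inter_pts_le_two (h : SolidSections q K) {p : ℙ F V} {N : Submodule F V}
    (hN : N ∈ lines K) (hpN : p ∉ pts N) : (cone K p ∩ pts N).ncard ≤ 2 := by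
  by_contra! hN3
  obtain ⟨x₁, hx₁, x₂, hx₂, x₃, hx₃, h₁₂, h₁₃, h₂₃⟩ := (Set.two_lt_ncard (Set.toFinite _)).mp hN3
  have hline : ∀ x ∈ cone K p ∩ pts N,
      ∃ M ∈ linesThrough K p, x ∈ pts M ∧ M ≤ N ⊔ p.submodule := by
    rintro x ⟨hxc, hxN⟩
    obtain ⟨M, hM, hxM⟩ := Set.mem_iUnion₂.mp hxc
    have hxp : x ≠ p := fun e => hpN (e ▸ hxN)
    exact ⟨M, hM, hxM, (eq_sup_of_mem_pts hM.1.1 hxp hxM hM.2).symm ▸ sup_le_sup_right hxN _⟩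
  obtain ⟨M₁, hM₁, hxM₁, hM₁le⟩ := hline x₁ hx₁
  obtain ⟨M₂, hM₂, hxM₂, hM₂le⟩ := hline x₂ hx₂
  obtain ⟨M₃, hM₃, hxM₃, hM₃le⟩ := hline x₃ hx₃
  -- a line through `p` meeting `N` twice would be `N`, which avoids `p`
  have hne : ∀ {x x' : ℙ F V} {M M'}, x ≠ x' → x ∈ cone K p ∩ pts N → x' ∈ cone K p ∩ pts N →
      M ∈ linesThrough K p → x ∈ pts M → x' ∈ pts M' → M ≠ M' := by
    rintro x x' M M' hxx' hx hx' hM hxM hx'M rfl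
    exact hpN (eq_of_mem_pts_of_mem_pts hM.1.1 hN.1 hxx' hxM hx'M hx.2 hx'.2 ▸ hM.2)
  exact h.false_of_coplanar (by rw [finrank_sup_submodule_of_notMem hpN, hN.1]) hM₁.1 hM₂.1 hM₃.1
    (hne h₁₂ hx₁ hx₂ hM₁ hxM₁ hxM₂) (hne h₁₃ hx₁ hx₃ hM₁ hxM₁ hxM₃)
    (hne h₂₃ hx₂ hx₃ hM₂ hxM₂ hxM₃) hM₁le hM₂le hM₃le

lemma mem_cone_of_le_ncard (h : SolidSections q K) {p p' : ℙ F V}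
    (hp : q + 1 ≤ (linesThrough K p).ncard) (hp' : q + 1 ≤ (linesThrough K p').ncard) :
    p ∈ cone K p' := by
  by_contra hpc
  have h3 := h.three_le
  have hcone : ∀ {r}, q + 1 ≤ (linesThrough K r).ncard → (cone K r).ncard = q ^ 2 + q + 1 :=
    fun hr => by
      rw [ncard_cone h.card_eq (Set.nonempty_of_ncard_ne_zero (by omega)),
        h.ncard_linesThrough_eq hr]
      ring
  have hlarge : q ^ 2 + 1 ≤ (cone K p ∩ cone K p').ncard := by
    have := Set.ncard_inter_add_ncard_union (cone K p) (cone K p')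
    have : (cone K p ∪ cone K p').ncard ≤ K.ncard :=
      Set.ncard_le_ncard (Set.union_subset cone_subset cone_subset)
    rw [hcone hp, hcone hp', h.ncard_eq] at *
    omega
  have hsub : cone K p ∩ cone K p' ⊆ ⋃ N ∈ linesThrough K p', cone K p ∩ pts N :=
    fun x ⟨hxp, hxp'⟩ => by
      obtain ⟨N, hN, hxN⟩ := Set.mem_iUnion₂.mp hxp'
      exact Set.mem_biUnion hN ⟨hxp, hxN⟩
  have hsmall := (Set.ncard_le_ncard hsub).trans <| ncard_biUnion_le_mul (Set.toFinite _) _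
    fun N hN => h.ncard_cone_inter_pts_le_two hN.1 fun hpN => hpc (Set.mem_biUnion hN hpN)
  rw [h.ncard_linesThrough_eq hp'] at hsmall
  nlinarith

lemma ncard_linesThrough_lt (h : SolidSections q K) (p : ℙ F V) :
    (linesThrough K p).ncard < q + 1 := by
  by_contra! hp
  have hlt : (cone K p).ncard < K.ncard := by
    rw [ncard_cone h.card_eq (Set.nonempty_of_ncard_ne_zero (by omega)),
      h.ncard_linesThrough_eq hp, h.ncard_eq]
    nlinarith [h.three_le]
  obtain ⟨w, hwK, hwp⟩ := Set.exists_mem_notMem_of_ncard_lt_ncard hlt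
  exact hwp (h.mem_cone_of_le_ncard (h.le_ncard_linesThrough_of_notMem_cone hp hwK hwp) hp)

lemma pts_inter_nonempty (h : SolidSections q K) {L L' : Submodule F V} (hL : L ∈ lines K)
    (hL' : L' ∈ lines K) : (pts L ∩ pts L').Nonempty := by
  by_contra hdisj
  have hinf : L ⊓ L' = ⊥ := by
    refine eq_bot_iff.mpr fun v hv => ?_
    by_contra hv0
    exact hdisj ⟨Projectivization.mk F v hv0, (mk_mem_pts hv0).mpr hv.1, (mk_mem_pts hv0).mpr hv.2⟩
  have hW : finrank F ↥(L ⊔ L') = 4 := by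
    have := finrank_sup_add_finrank_inf_eq L L'
    rw [hinf, finrank_bot, hL.1, hL'.1] at this
    omega
  obtain ⟨T, hTK, hT3, -, hKW⟩ := h.exists_lines_of_le hW hL le_sup_left
  -- each point `x` of `L'` is on a line of `K` in the plane of `L` and `x`, hence in the
  -- section of the solid `L ⊔ L'`; two points of `L'` share that line, which is then `L'`
  have hchoice : ∀ x ∈ pts L', ∃ M ∈ linesThrough K x, M ≤ L ⊔ x.submodule := fun x hx =>
    (h.exists_coplanar_line_or_le_ncard hL (hL'.2 hx) fun hxL => hdisj ⟨x, hxL, hx⟩).resolve_right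
      (h.ncard_linesThrough_lt x).not_ge
  choose! M hM hMle using hchoice
  have hMT : ∀ x ∈ pts L', M x ∈ T := fun x hx => by
    refine h.mem_of_pts_subset (hM x hx).1 hTK hT3 (hKW ▸ fun y hy => ⟨(hM x hx).1.2 hy, ?_⟩)
    exact pts_subset_pts_iff.mpr ((hMle x hx).trans (sup_le_sup_left hx _)) hy
  obtain ⟨x, hx, y, hy, hxy, hMxy⟩ := Set.exists_ne_map_eq_of_ncard_lt_of_maps_to
    (by rw [ncard_pts_eq_add_one h.card_eq hL'.1]; have := h.three_le; omega) hMT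
  have hML' : M y = L' := eq_of_mem_pts_of_mem_pts (hM y hy).1.1 hL'.1 hxy (hMxy ▸ (hM x hx).2)
    (hM y hy).2 hx hy
  have hyL : y ∉ pts L := fun hyL => hdisj ⟨y, hyL, hy⟩
  have := finrank_mono (sup_le le_sup_left (hML' ▸ hMle y hy) : L ⊔ L' ≤ L ⊔ y.submodule)
  rw [hW, finrank_sup_submodule_of_notMem hyL, hL.1] at this
  omega

lemma exists_forall_mem_pts (h : SolidSections q K) :
    ∃ A : ℙ F V, ∀ L ∈ lines K, A ∈ pts L := by
  obtain ⟨L₀, hL₀⟩ := h.lines_nonempty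
  by_cases hall : ∀ L ∈ lines K, L = L₀
  · obtain ⟨A, hA⟩ := Set.nonempty_of_ncard_ne_zero
      (by rw [ncard_pts_eq_add_one h.card_eq hL₀.1]; omega : (pts L₀).ncard ≠ 0)
    exact ⟨A, fun L hL => hall L hL ▸ hA⟩
  push Not at hall
  obtain ⟨L₁, hL₁, h₁₀⟩ := hall
  obtain ⟨A, hA₁, hA₀⟩ := h.pts_inter_nonempty hL₁ hL₀
  have hπ : finrank F ↥(L₁ ⊔ L₀) = 3 := finrank_sup_eq_three hL₁.1 hL₀.1 h₁₀ hA₁ hA₀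
  refine ⟨A, fun L hL => ?_⟩
  -- otherwise `L` meets `L₁` and `L₀` in two points, so lies in their plane
  by_contra hAL
  obtain ⟨B, hB, hB₁⟩ := h.pts_inter_nonempty hL hL₁
  obtain ⟨C, hC, hC₀⟩ := h.pts_inter_nonempty hL hL₀
  have hBC : B ≠ C := by
    rintro rfl
    exact h₁₀ (eq_of_mem_pts_of_mem_pts hL₁.1 hL₀.1 (fun e : B = A => hAL (e ▸ hB)) hB₁ hA₁
      hC₀ hA₀)
  have hLle : L ≤ L₁ ⊔ L₀ := (eq_sup_of_mem_pts hL.1 hBC hB hC).symm ▸ sup_le_sup hB₁ hC₀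
  exact h.false_of_coplanar hπ hL₁ hL₀ hL h₁₀ (fun e => hAL (e ▸ hA₁))
    (fun e => hAL (e ▸ hA₀)) le_sup_left le_sup_right hLle

end SolidSections

theorem not_solidSections [Finite V] {q : ℕ} {K : Set (ℙ F V)} : ¬ SolidSections q K := by
  intro h
  obtain ⟨A, hthrough⟩ := h.exists_forall_mem_pts
  obtain ⟨L, hL⟩ := h.lines_nonempty
  have hKcone : K ⊆ cone K A := fun x hx => by
    obtain ⟨M, hM, hxM⟩ := h.linesThrough_nonempty hx
    exact Set.mem_biUnion ⟨hM, hthrough M hM⟩ hxM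
  have := Set.ncard_le_ncard hKcone
  rw [ncard_cone h.card_eq ⟨L, hL, hthrough L hL⟩, h.ncard_eq] at this
  have := Nat.mul_le_mul_right q (Nat.lt_succ_iff.mp (h.ncard_linesThrough_lt A))
  nlinarith [h.three_le]

end Configuration

section FiveTypes

variable {F : Type} [Field F] [Fintype F] {q : ℕ} {K : Set (PGPt F 4)}

lemma solid_cases_of_fiveTypeHyp (hq : Fintype.card F = q) (hyp : FiveTypeHyp F K)
    (hcon : ∀ C, IsConic F 4 C → ¬ C ⊆ K) (W : Submodule F (Fin (4 + 1) → F))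
    (hW : finrank F W = 4) :
    (∃ T ⊆ lines K, T.ncard ≤ 3 ∧ K ∩ pts W = ⋃ L ∈ T, pts L) ∨
      ((K ∩ pts W).ncard ≤ q + 1 ∧ ∀ L ∈ lines K, ¬ L ≤ W) := by
  rcases hyp (pts W) ⟨W, hW, rfl⟩ with ⟨ℓ, ⟨L, hL, rfl⟩, heq⟩ |
    ⟨ℓ, m, ⟨L, hL, rfl⟩, ⟨M, hM, rfl⟩, -, heq⟩ |
    ⟨ℓ, m, n, ⟨L, hL, rfl⟩, ⟨M, hM, rfl⟩, ⟨N, hN, rfl⟩, -, -, -, heq⟩ |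
    ⟨ℓ, C, -, hC, heq⟩ | ⟨C, ⟨f, hf, rfl⟩, heq⟩
  · exact .inl (exists_lines_of_eq_union hL hL hL (by rwa [Set.union_self, Set.union_self]))
  · exact .inl (exists_lines_of_eq_union hL hL hM (by rwa [Set.union_self]))
  · exact .inl (exists_lines_of_eq_union hL hM hN heq)
  · exact absurd (fun x hx => (heq ▸ Or.inr hx : x ∈ K ∩ pts W).1) (hcon C hC)
  · change K ∩ pts W = twistedCubic f at heq
    refine .inr ⟨heq ▸ hq ▸ Nat.card_eq_fintype_card (α := F) ▸ ncard_twistedCubic_le hf,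
      fun L hL hLW => ?_⟩
    have hsub : pts L ⊆ twistedCubic f ∩ pts L :=
      fun x hx => ⟨heq ▸ ⟨hL.2 hx, pts_subset_pts_iff.mpr hLW hx⟩, hx⟩
    have := (Set.ncard_le_ncard hsub).trans (ncard_twistedCubic_inter_pts_le_two hf hL.1)
    rw [ncard_pts_eq_add_one hq hL.1] at this
    have := hq ▸ Fintype.one_lt_card (α := F)
    omega

end FiveTypes

end PG

/-- `K` contains at least one non-degenerate conic. -/
theorem stmt1 (q : ℕ) (hq : Fintype.card F = q) (h3 : 3 ≤ q) (K : Set (PGPt F 4))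
    (hK : K.ncard = q ^ 2 + 2 * q + 1) (hyp : FiveTypeHyp F K) :
    ∃ C : Set (PGPt F 4), IsConic F 4 C ∧ C ⊆ K := by
  by_contra! hcon
  exact PG.not_solidSections ⟨hq, h3, by simp, hK, PG.solid_cases_of_fiveTypeHyp hq hyp hcon⟩
end

section
/- Let K be a set of q^2+2q+1 points in PG(4,q), q ≥ 3, satisfying the 3-space intersection hypotheses (each 3-space meets K in one, two or three lines, a line and a conic, or a twisted cubic), with sticks m_0,...,m_q and baseline b. Fix a point P on m_0 not on b and a non-degenerate conic C_1 of K through P. Project K from P onto a suitable 3-space Π containing b and disjoint from P. Then the images of the sticks m_1,...,m_q under this projection are q pairwise skew lines. -/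
open Projectivization

variable (F : Type) [Field F] [Fintype F]

section Helpers
open Module
open scoped LinearAlgebra.Projectivization

variable {V : Type} [AddCommGroup V] [Module F V] [FiniteDimensional F V]

omit [Fintype F] in
lemma pt_ne_of_submodule_ne {p q : ℙ F V} (h : p.submodule ≠ q.submodule) : p ≠ q :=
  fun e => h (by rw [e])

omit [Fintype F] in
lemma submodule_ne_of_pt_ne {p q : ℙ F V} (h : p ≠ q) : p.submodule ≠ q.submodule :=
  fun e => h (Projectivization.submodule_injective e)

omit [Fintype F] in
lemma inf_point_eq_bot {p : ℙ F V} {W : Submodule F V} (h : ¬ p.submodule ≤ W) :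
    p.submodule ⊓ W = ⊥ := by
  have hlt : p.submodule ⊓ W < p.submodule := by
    refine lt_of_le_of_ne inf_le_left fun e => h ?_
    rw [← e]; exact inf_le_right
  have := Submodule.finrank_lt_finrank_of_lt hlt
  rw [p.finrank_submodule] at this
  have h0 : finrank F ↥(p.submodule ⊓ W) = 0 := by omega
  exact Submodule.finrank_eq_zero.mp h0

omit [Fintype F] in
lemma finrank_point_sup {p : ℙ F V} {W : Submodule F V} (h : ¬ p.submodule ≤ W) :
    finrank F ↥(p.submodule ⊔ W) = finrank F ↥W + 1 := by
  have := Submodule.finrank_sup_add_finrank_inf_eq p.submodule W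
  rw [inf_point_eq_bot F h, p.finrank_submodule] at this
  simp only [finrank_bot] at this
  omega

omit [Fintype F] in
lemma finrank_sup_points {p q : ℙ F V} (h : p ≠ q) :
    finrank F ↥(p.submodule ⊔ q.submodule) = 2 := by
  have hne : ¬ p.submodule ≤ q.submodule := by
    intro hle
    exact submodule_ne_of_pt_ne F h (Submodule.eq_of_le_of_finrank_le hle
      (by rw [p.finrank_submodule, q.finrank_submodule]))
  rw [finrank_point_sup F hne, q.finrank_submodule]

omit [Fintype F] in
/-- two distinct points of a 2-dimensional subspace span it -/
lemma line_eq_sup {W : Submodule F V} (hW : finrank F ↥W = 2) {p q : ℙ F V}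
    (hp : p.submodule ≤ W) (hq : q.submodule ≤ W) (hpq : p ≠ q) :
    p.submodule ⊔ q.submodule = W :=
  Submodule.eq_of_le_of_finrank_le (sup_le hp hq) (by rw [finrank_sup_points F hpq, hW])

omit [Fintype F] [FiniteDimensional F V] in
lemma le_of_setle {W1 W2 : Submodule F V}
    (h : {p : ℙ F V | p.submodule ≤ W1} ⊆ {p | p.submodule ≤ W2}) : W1 ≤ W2 := by
  intro v hv
  by_cases hv0 : v = 0
  · simp [hv0]
  · have hm : (Projectivization.mk F v hv0).submodule ≤ W1 := by
      rw [Projectivization.submodule_mk, Submodule.span_singleton_le_iff_mem]; exact hv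
    have := h hm
    rw [Set.mem_setOf_eq, Projectivization.submodule_mk,
      Submodule.span_singleton_le_iff_mem] at this
    exact this

omit [Fintype F] in
lemma W_eq_of_setle {W1 W2 : Submodule F V} (h1 : finrank F ↥W1 = 2)
    (h2 : finrank F ↥W2 = 2)
    (h : {p : ℙ F V | p.submodule ≤ W1} ⊆ {p | p.submodule ≤ W2}) : W1 = W2 :=
  Submodule.eq_of_le_of_finrank_le (le_of_setle F h) (by omega)

omit [Fintype F] in
lemma finrank_inf_ge {U W Z : Submodule F V} (hU : U ≤ Z) (hW : W ≤ Z) :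
    finrank F ↥U + finrank F ↥W ≤ finrank F ↥Z + finrank F ↥(U ⊓ W) := by
  have h1 := Submodule.finrank_sup_add_finrank_inf_eq U W
  have h2 : finrank F ↥(U ⊔ W) ≤ finrank F ↥Z := Submodule.finrank_mono (sup_le hU hW)
  omega

omit [Fintype F] in
lemma quad_solve {a1 b1 a2 b2 a3 b3 c1 c2 c3 : F}
    (d12 : a1 * b2 - a2 * b1 ≠ 0) (d13 : a1 * b3 - a3 * b1 ≠ 0) (d23 : a2 * b3 - a3 * b2 ≠ 0)
    (E1 : c1 * a1 ^ 2 + c2 * a2 ^ 2 + c3 * a3 ^ 2 = 0)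
    (E2 : c1 * (a1 * b1) + c2 * (a2 * b2) + c3 * (a3 * b3) = 0)
    (E3 : c1 * b1 ^ 2 + c2 * b2 ^ 2 + c3 * b3 ^ 2 = 0) :
    c1 = 0 ∧ c2 = 0 ∧ c3 = 0 := by
  refine ⟨?_, ?_, ?_⟩
  · have h : (a1 * b2 - a2 * b1) * ((a1 * b3 - a3 * b1) * c1) = 0 := by
      linear_combination b2 * b3 * E1 - (a2 * b3 + a3 * b2) * E2 + a2 * a3 * E3
    rcases mul_eq_zero.mp h with h | h
    · exact absurd h d12
    · rcases mul_eq_zero.mp h with h | h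
      · exact absurd h d13
      · exact h
  · have h : (a1 * b2 - a2 * b1) * ((a2 * b3 - a3 * b2) * c2) = 0 := by
      linear_combination -(b1 * b3 * E1) + (a1 * b3 + a3 * b1) * E2 - a1 * a3 * E3
    rcases mul_eq_zero.mp h with h | h
    · exact absurd h d12
    · rcases mul_eq_zero.mp h with h | h
      · exact absurd h d23
      · exact h
  · have h : (a1 * b3 - a3 * b1) * ((a2 * b3 - a3 * b2) * c3) = 0 := by
      linear_combination b1 * b2 * E1 - (a1 * b2 + a2 * b1) * E2 + a1 * a2 * E3
    rcases mul_eq_zero.mp h with h | h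
    · exact absurd h d13
    · rcases mul_eq_zero.mp h with h | h
      · exact absurd h d23
      · exact h

omit [Fintype F] in
lemma prop_of_delta_zero {a1 b1 a2 b2 : F} (h1 : a1 ≠ 0 ∨ b1 ≠ 0) (h2 : a2 ≠ 0 ∨ b2 ≠ 0)
    (hd : a1 * b2 - a2 * b1 = 0) : ∃ c : F, c ≠ 0 ∧ a2 = c * a1 ∧ b2 = c * b1 := by
  rcases h1 with h1 | h1
  · by_cases ha2 : a2 = 0
    · exfalso
      have hb2 : b2 = 0 := by
        have : a1 * b2 = 0 := by linear_combination hd + b1 * ha2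
        rcases mul_eq_zero.mp this with h | h
        · exact absurd h h1
        · exact h
      rcases h2 with h2 | h2 <;> [exact h2 ha2; exact h2 hb2]
    · exact ⟨a2 / a1, div_ne_zero ha2 h1, by field_simp, by field_simp; linear_combination hd⟩
  · by_cases hb2 : b2 = 0
    · exfalso
      have ha2 : a2 = 0 := by
        have : a2 * b1 = 0 := by linear_combination -hd + a1 * hb2
        rcases mul_eq_zero.mp this with h | h
        · exact h
        · exact absurd h h1
      rcases h2 with h2 | h2 <;> [exact h2 ha2; exact h2 hb2]
    · exact ⟨b2 / b1, div_ne_zero hb2 h1, by field_simp; linear_combination -hd, by field_simp⟩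

lemma exists_third (h3 : 3 ≤ Fintype.card F) : ∃ c : F, c ≠ 0 ∧ c ≠ 1 := by
  classical
  by_contra h
  push_neg at h
  have hsub : (Finset.univ : Finset F) ⊆ {0, 1} := by
    intro x _
    rcases eq_or_ne x 0 with h0 | h0
    · simp [h0]
    · simp [h x h0]
  have hc := Finset.card_le_card hsub
  have h2 : ({0, 1} : Finset F).card ≤ 2 := (Finset.card_insert_le _ _).trans (by simp)
  rw [Finset.card_univ] at hc
  omega

/-- a 2-dimensional subspace carries at least four distinct points -/
lemma four_points (h3 : 3 ≤ Fintype.card F) {W : Submodule F V} (hW : finrank F ↥W = 2) :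
    ∃ p1 p2 p3 p4 : ℙ F V, p1.submodule ≤ W ∧ p2.submodule ≤ W ∧ p3.submodule ≤ W ∧
      p4.submodule ≤ W ∧ p1 ≠ p2 ∧ p1 ≠ p3 ∧ p1 ≠ p4 ∧ p2 ≠ p3 ∧ p2 ≠ p4 ∧ p3 ≠ p4 := by
  obtain ⟨c, hc0, hc1⟩ := exists_third F h3
  set b := (Module.finBasis F ↥W).reindex (finCongr (by rw [hW])) with hb
  have li : LinearIndependent F (W.subtype ∘ ⇑b) := b.linearIndependent.map' _ W.ker_subtype
  set e1 : V := (b 0 : V) with he1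
  set e2 : V := (b 1 : V) with he2
  have key : ∀ x y : F, x • e1 + y • e2 = 0 → x = 0 ∧ y = 0 := by
    intro x y hxy
    have := Fintype.linearIndependent_iff.mp li ![x, y] (by
      simp only [Fin.sum_univ_two, Matrix.cons_val_zero, Matrix.cons_val_one, Matrix.head_cons,
        Function.comp_apply, Submodule.coe_subtype]
      exact hxy)
    exact ⟨this 0, this 1⟩
  have he1W : e1 ∈ W := (b 0).2
  have he2W : e2 ∈ W := (b 1).2
  have h1 : e1 ≠ 0 := fun h => one_ne_zero ((key 1 0 (by simp [h])).1)
  have h2 : e2 ≠ 0 := fun h => one_ne_zero ((key 0 1 (by simp [h])).2)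
  have h3' : e1 + e2 ≠ 0 := fun h => one_ne_zero ((key 1 1 (by simpa using h)).1)
  have h4 : e1 + c • e2 ≠ 0 := fun h => one_ne_zero ((key 1 c (by simpa using h)).1)
  refine ⟨Projectivization.mk F e1 h1, Projectivization.mk F e2 h2,
    Projectivization.mk F (e1 + e2) h3', Projectivization.mk F (e1 + c • e2) h4,
    ?_, ?_, ?_, ?_, ?_, ?_, ?_, ?_, ?_, ?_⟩
  · rw [Projectivization.submodule_mk, Submodule.span_singleton_le_iff_mem]; exact he1W
  · rw [Projectivization.submodule_mk, Submodule.span_singleton_le_iff_mem]; exact he2W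
  · rw [Projectivization.submodule_mk, Submodule.span_singleton_le_iff_mem]
    exact add_mem he1W he2W
  · rw [Projectivization.submodule_mk, Submodule.span_singleton_le_iff_mem]
    exact add_mem he1W (Submodule.smul_mem _ _ he2W)
  · intro h
    rw [Projectivization.mk_eq_mk_iff] at h
    obtain ⟨a, ha⟩ := h
    rw [Units.smul_def] at ha
    have := (key (-1) (a : F) (by linear_combination (norm := module) ha)).1
    exact one_ne_zero (neg_eq_zero.mp this)
  · intro h
    rw [Projectivization.mk_eq_mk_iff] at h
    obtain ⟨a, ha⟩ := h
    rw [Units.smul_def] at ha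
    exact a.ne_zero (key ((a : F) - 1) (a : F) (by linear_combination (norm := module) ha)).2
  · intro h
    rw [Projectivization.mk_eq_mk_iff] at h
    obtain ⟨a, ha⟩ := h
    rw [Units.smul_def] at ha
    have := (key ((a : F) - 1) ((a : F) * c) (by linear_combination (norm := module) ha)).2
    rcases mul_eq_zero.mp this with h' | h'
    · exact a.ne_zero h'
    · exact hc0 h'
  · intro h
    rw [Projectivization.mk_eq_mk_iff] at h
    obtain ⟨a, ha⟩ := h
    rw [Units.smul_def] at ha
    exact a.ne_zero (key (a : F) ((a : F) - 1) (by linear_combination (norm := module) ha)).1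
  · intro h
    rw [Projectivization.mk_eq_mk_iff] at h
    obtain ⟨a, ha⟩ := h
    rw [Units.smul_def] at ha
    exact a.ne_zero (key (a : F) ((a : F) * c - 1) (by linear_combination (norm := module) ha)).1
  · intro h
    rw [Projectivization.mk_eq_mk_iff] at h
    obtain ⟨a, ha⟩ := h
    rw [Units.smul_def] at ha
    have h1' := (key ((a : F) - 1) ((a : F) * c - 1) (by linear_combination (norm := module) ha)).1
    have h2' := (key ((a : F) - 1) ((a : F) * c - 1) (by linear_combination (norm := module) ha)).2
    have ha1 : (a : F) = 1 := by linear_combination h1'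
    exact hc1 (by rw [ha1, one_mul] at h2'; linear_combination h2')

omit [Fintype F] in
lemma conic_delta_ne {W' : Type} [AddCommGroup W'] [Module F W']
    {f : (Fin 3 → F) →ₗ[F] W'}
    {a1 b1 a2 b2 : F} (h1 : a1 ≠ 0 ∨ b1 ≠ 0) (h2 : a2 ≠ 0 ∨ b2 ≠ 0)
    (hne : Submodule.span F {f ![a1 ^ 2, a1 * b1, b1 ^ 2]} ≠
      Submodule.span F {f ![a2 ^ 2, a2 * b2, b2 ^ 2]}) :
    a1 * b2 - a2 * b1 ≠ 0 := by
  intro hd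
  obtain ⟨c, hc, hca, hcb⟩ := prop_of_delta_zero F h1 h2 hd
  apply hne
  have hv : (![a2 ^ 2, a2 * b2, b2 ^ 2] : Fin 3 → F) = (c ^ 2) • ![a1 ^ 2, a1 * b1, b1 ^ 2] := by
    funext i
    fin_cases i <;> simp [hca, hcb] <;> ring
  rw [hv, map_smul, Submodule.span_singleton_smul_eq (by simp [isUnit_iff_ne_zero, hc]) _]

omit [Fintype F] in
lemma cubic_delta_ne {W' : Type} [AddCommGroup W'] [Module F W']
    {f : (Fin 4 → F) →ₗ[F] W'}
    {a1 b1 a2 b2 : F} (h1 : a1 ≠ 0 ∨ b1 ≠ 0) (h2 : a2 ≠ 0 ∨ b2 ≠ 0)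
    (hne : Submodule.span F {f ![a1 ^ 3, a1 ^ 2 * b1, a1 * b1 ^ 2, b1 ^ 3]} ≠
      Submodule.span F {f ![a2 ^ 3, a2 ^ 2 * b2, a2 * b2 ^ 2, b2 ^ 3]}) :
    a1 * b2 - a2 * b1 ≠ 0 := by
  intro hd
  obtain ⟨c, hc, hca, hcb⟩ := prop_of_delta_zero F h1 h2 hd
  apply hne
  have hv : (![a2 ^ 3, a2 ^ 2 * b2, a2 * b2 ^ 2, b2 ^ 3] : Fin 4 → F) =
      (c ^ 3) • ![a1 ^ 3, a1 ^ 2 * b1, a1 * b1 ^ 2, b1 ^ 3] := by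
    funext i
    fin_cases i <;> simp [hca, hcb] <;> ring
  rw [hv, map_smul, Submodule.span_singleton_smul_eq (by simp [isUnit_iff_ne_zero, hc]) _]

omit [Fintype F] in
lemma quad_li {f : (Fin 3 → F) →ₗ[F] V} (hf : Function.Injective f)
    {a1 b1 a2 b2 a3 b3 : F}
    (d12 : a1 * b2 - a2 * b1 ≠ 0) (d13 : a1 * b3 - a3 * b1 ≠ 0) (d23 : a2 * b3 - a3 * b2 ≠ 0) :
    LinearIndependent F ![f ![a1 ^ 2, a1 * b1, b1 ^ 2], f ![a2 ^ 2, a2 * b2, b2 ^ 2],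
      f ![a3 ^ 2, a3 * b3, b3 ^ 2]] := by
  rw [Fintype.linearIndependent_iff]
  intro g hg
  rw [Fin.sum_univ_three] at hg
  simp only [Matrix.cons_val_zero, Matrix.cons_val_one, Matrix.head_cons,
    Matrix.cons_val_two, Matrix.tail_cons] at hg
  have h0 : g 0 • (![a1 ^ 2, a1 * b1, b1 ^ 2] : Fin 3 → F) + g 1 • ![a2 ^ 2, a2 * b2, b2 ^ 2] +
      g 2 • ![a3 ^ 2, a3 * b3, b3 ^ 2] = 0 := by
    apply hf
    rw [map_add, map_add, map_smul, map_smul, map_smul, map_zero]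
    exact hg
  have E1 := congrFun h0 0
  have E2 := congrFun h0 1
  have E3 := congrFun h0 2
  simp only [Pi.add_apply, Pi.smul_apply, Matrix.cons_val_zero, Matrix.cons_val_one,
    Matrix.head_cons, Matrix.cons_val_two, Matrix.tail_cons, smul_eq_mul, Pi.zero_apply] at E1 E2 E3
  obtain ⟨hg0, hg1, hg2⟩ := quad_solve F d12 d13 d23 E1 E2 E3
  intro i
  fin_cases i <;> assumption

omit [Fintype F] in
lemma cubic_li {f : (Fin 4 → F) →ₗ[F] V} (hf : Function.Injective f)
    {a1 b1 a2 b2 a3 b3 : F} (h1 : a1 ≠ 0 ∨ b1 ≠ 0) (h2 : a2 ≠ 0 ∨ b2 ≠ 0) (h3 : a3 ≠ 0 ∨ b3 ≠ 0)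
    (d12 : a1 * b2 - a2 * b1 ≠ 0) (d13 : a1 * b3 - a3 * b1 ≠ 0) (d23 : a2 * b3 - a3 * b2 ≠ 0) :
    LinearIndependent F ![f ![a1 ^ 3, a1 ^ 2 * b1, a1 * b1 ^ 2, b1 ^ 3],
      f ![a2 ^ 3, a2 ^ 2 * b2, a2 * b2 ^ 2, b2 ^ 3],
      f ![a3 ^ 3, a3 ^ 2 * b3, a3 * b3 ^ 2, b3 ^ 3]] := by
  rw [Fintype.linearIndependent_iff]
  intro g hg
  rw [Fin.sum_univ_three] at hg
  simp only [Matrix.cons_val_zero, Matrix.cons_val_one, Matrix.head_cons,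
    Matrix.cons_val_two, Matrix.tail_cons] at hg
  have h0 : g 0 • (![a1 ^ 3, a1 ^ 2 * b1, a1 * b1 ^ 2, b1 ^ 3] : Fin 4 → F) +
      g 1 • ![a2 ^ 3, a2 ^ 2 * b2, a2 * b2 ^ 2, b2 ^ 3] +
      g 2 • ![a3 ^ 3, a3 ^ 2 * b3, a3 * b3 ^ 2, b3 ^ 3] = 0 := by
    apply hf
    rw [map_add, map_add, map_smul, map_smul, map_smul, map_zero]
    exact hg
  have C0 := congrFun h0 0
  have C1 := congrFun h0 1
  have C2 := congrFun h0 2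
  have C3 := congrFun h0 3
  simp only [Pi.add_apply, Pi.smul_apply, Matrix.cons_val_zero, Matrix.cons_val_one,
    Matrix.head_cons, Matrix.cons_val_two, Matrix.tail_cons, Matrix.cons_val_three,
    smul_eq_mul, Pi.zero_apply] at C0 C1 C2 C3
  have ha : g 0 * a1 = 0 ∧ g 1 * a2 = 0 ∧ g 2 * a3 = 0 := by
    apply quad_solve F d12 d13 d23 <;> [linear_combination C0; linear_combination C1;
      linear_combination C2]
  have hb : g 0 * b1 = 0 ∧ g 1 * b2 = 0 ∧ g 2 * b3 = 0 := by
    apply quad_solve F d12 d13 d23 <;> [linear_combination C1; linear_combination C2;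
      linear_combination C3]
  have key : ∀ (x : F) (a b : F), a ≠ 0 ∨ b ≠ 0 → x * a = 0 → x * b = 0 → x = 0 := by
    intro x a b hab hxa hxb
    rcases hab with h | h
    · rcases mul_eq_zero.mp hxa with h' | h' <;> [exact h'; exact absurd h' h]
    · rcases mul_eq_zero.mp hxb with h' | h' <;> [exact h'; exact absurd h' h]
  intro i
  fin_cases i
  · exact key _ _ _ h1 ha.1 hb.1
  · exact key _ _ _ h2 ha.2.1 hb.2.1
  · exact key _ _ _ h3 ha.2.2 hb.2.2

omit [Fintype F] in
/-- three linearly independent vectors inside a 2-dimensional subspace: contradiction -/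
lemma rank_contra {v1 v2 v3 : V} (li : LinearIndependent F ![v1, v2, v3])
    {W : Submodule F V} (hW : finrank F ↥W = 2)
    (h1 : v1 ∈ W) (h2 : v2 ∈ W) (h3 : v3 ∈ W) : False := by
  have hsp : Submodule.span F (Set.range ![v1, v2, v3]) ≤ W := by
    rw [Submodule.span_le]
    rintro x ⟨i, rfl⟩
    fin_cases i <;> assumption
  have hcard := finrank_span_eq_card li
  have hmono := Submodule.finrank_mono hsp
  rw [hcard] at hmono
  simp only [Fintype.card_fin] at hmono
  omega

omit [Fintype F] in
lemma mem_of_span_le {v : V} {W : Submodule F V} {p : ℙ F V}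
    (h : p.submodule = Submodule.span F {v}) (hle : p.submodule ≤ W) : v ∈ W := by
  rw [h, Submodule.span_singleton_le_iff_mem] at hle
  exact hle

omit [Fintype F] in
/-- no three distinct points of a non-degenerate conic are collinear -/
lemma conic_no_three {n : ℕ} {C : Set (PGPt F n)} (hC : IsConic F n C)
    {W : Submodule F (Fin (n + 1) → F)} (hW : finrank F ↥W = 2)
    {p1 p2 p3 : PGPt F n} (h1 : p1 ∈ C) (h2 : p2 ∈ C) (h3 : p3 ∈ C)
    (hle1 : p1.submodule ≤ W) (hle2 : p2.submodule ≤ W) (hle3 : p3.submodule ≤ W)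
    (h12 : p1 ≠ p2) (h13 : p1 ≠ p3) (h23 : p2 ≠ p3) : False := by
  obtain ⟨f, hf, hCeq⟩ := hC
  rw [hCeq] at h1 h2 h3
  obtain ⟨a1, b1, hab1, hs1⟩ := h1
  obtain ⟨a2, b2, hab2, hs2⟩ := h2
  obtain ⟨a3, b3, hab3, hs3⟩ := h3
  have d12 : a1 * b2 - a2 * b1 ≠ 0 := conic_delta_ne F hab1 hab2
    (by rw [← hs1, ← hs2]; exact submodule_ne_of_pt_ne F h12)
  have d13 : a1 * b3 - a3 * b1 ≠ 0 := conic_delta_ne F hab1 hab3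
    (by rw [← hs1, ← hs3]; exact submodule_ne_of_pt_ne F h13)
  have d23 : a2 * b3 - a3 * b2 ≠ 0 := conic_delta_ne F hab2 hab3
    (by rw [← hs2, ← hs3]; exact submodule_ne_of_pt_ne F h23)
  exact rank_contra F (quad_li F hf d12 d13 d23) hW
    (mem_of_span_le F hs1 hle1) (mem_of_span_le F hs2 hle2) (mem_of_span_le F hs3 hle3)

omit [Fintype F] in
/-- no three distinct points of a twisted cubic are collinear -/
lemma cubic_no_three {n : ℕ} {C : Set (PGPt F n)} (hC : IsTwistedCubic F n C)
    {W : Submodule F (Fin (n + 1) → F)} (hW : finrank F ↥W = 2)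
    {p1 p2 p3 : PGPt F n} (h1 : p1 ∈ C) (h2 : p2 ∈ C) (h3 : p3 ∈ C)
    (hle1 : p1.submodule ≤ W) (hle2 : p2.submodule ≤ W) (hle3 : p3.submodule ≤ W)
    (h12 : p1 ≠ p2) (h13 : p1 ≠ p3) (h23 : p2 ≠ p3) : False := by
  obtain ⟨f, hf, hCeq⟩ := hC
  rw [hCeq] at h1 h2 h3
  obtain ⟨a1, b1, hab1, hs1⟩ := h1
  obtain ⟨a2, b2, hab2, hs2⟩ := h2
  obtain ⟨a3, b3, hab3, hs3⟩ := h3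
  have d12 : a1 * b2 - a2 * b1 ≠ 0 := cubic_delta_ne F hab1 hab2
    (by rw [← hs1, ← hs2]; exact submodule_ne_of_pt_ne F h12)
  have d13 : a1 * b3 - a3 * b1 ≠ 0 := cubic_delta_ne F hab1 hab3
    (by rw [← hs1, ← hs3]; exact submodule_ne_of_pt_ne F h13)
  have d23 : a2 * b3 - a3 * b2 ≠ 0 := cubic_delta_ne F hab2 hab3
    (by rw [← hs2, ← hs3]; exact submodule_ne_of_pt_ne F h23)
  exact rank_contra F (cubic_li F hf hab1 hab2 hab3 d12 d13 d23) hW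
    (mem_of_span_le F hs1 hle1) (mem_of_span_le F hs2 hle2) (mem_of_span_le F hs3 hle3)

/-- a line contained in a union of three lines equals one of them -/
lemma line_in_three_lines (h3F : 3 ≤ Fintype.card F)
    {WL W1 W2 W3 : Submodule F V} (hL : finrank F ↥WL = 2) (h1 : finrank F ↥W1 = 2)
    (h2 : finrank F ↥W2 = 2) (h3 : finrank F ↥W3 = 2)
    (h : {p : ℙ F V | p.submodule ≤ WL} ⊆
      {p | p.submodule ≤ W1} ∪ {p | p.submodule ≤ W2} ∪ {p | p.submodule ≤ W3}) :
    WL = W1 ∨ WL = W2 ∨ WL = W3 := by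
  obtain ⟨p1, p2, p3, p4, hp1, hp2, hp3, hp4, d12, d13, d14, d23, d24, d34⟩ :=
    four_points F h3F hL
  have tl : ∀ {Wi : Submodule F V}, finrank F ↥Wi = 2 → ∀ {p q : ℙ F V},
      p.submodule ≤ WL → q.submodule ≤ WL → p.submodule ≤ Wi → q.submodule ≤ Wi →
      p ≠ q → WL = Wi := by
    intro Wi hWi p q hpL hqL hpi hqi hpq
    rw [← line_eq_sup F hL hpL hqL hpq, line_eq_sup F hWi hpi hqi hpq]
  have m1 := h hp1
  have m2 := h hp2
  have m3 := h hp3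
  have m4 := h hp4
  rcases m1 with (m1 | m1) | m1 <;> rcases m2 with (m2 | m2) | m2 <;>
    rcases m3 with (m3 | m3) | m3 <;> rcases m4 with (m4 | m4) | m4 <;>
    first
    | exact Or.inl (tl h1 hp1 hp2 m1 m2 d12)
    | exact Or.inl (tl h1 hp1 hp3 m1 m3 d13)
    | exact Or.inl (tl h1 hp1 hp4 m1 m4 d14)
    | exact Or.inl (tl h1 hp2 hp3 m2 m3 d23)
    | exact Or.inl (tl h1 hp2 hp4 m2 m4 d24)
    | exact Or.inl (tl h1 hp3 hp4 m3 m4 d34)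
    | exact Or.inr (Or.inl (tl h2 hp1 hp2 m1 m2 d12))
    | exact Or.inr (Or.inl (tl h2 hp1 hp3 m1 m3 d13))
    | exact Or.inr (Or.inl (tl h2 hp1 hp4 m1 m4 d14))
    | exact Or.inr (Or.inl (tl h2 hp2 hp3 m2 m3 d23))
    | exact Or.inr (Or.inl (tl h2 hp2 hp4 m2 m4 d24))
    | exact Or.inr (Or.inl (tl h2 hp3 hp4 m3 m4 d34))
    | exact Or.inr (Or.inr (tl h3 hp1 hp2 m1 m2 d12))
    | exact Or.inr (Or.inr (tl h3 hp1 hp3 m1 m3 d13))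
    | exact Or.inr (Or.inr (tl h3 hp1 hp4 m1 m4 d14))
    | exact Or.inr (Or.inr (tl h3 hp2 hp3 m2 m3 d23))
    | exact Or.inr (Or.inr (tl h3 hp2 hp4 m2 m4 d24))
    | exact Or.inr (Or.inr (tl h3 hp3 hp4 m3 m4 d34))

/-- a line contained in the union of a line and a conic equals the line -/
lemma line_in_line_conic {n : ℕ} (h3F : 3 ≤ Fintype.card F)
    {WL Wl : Submodule F (Fin (n + 1) → F)} (hL : finrank F ↥WL = 2)
    (hl : finrank F ↥Wl = 2) {C : Set (PGPt F n)} (hC : IsConic F n C)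
    (h : {p : PGPt F n | p.submodule ≤ WL} ⊆ {p | p.submodule ≤ Wl} ∪ C) :
    WL = Wl := by
  obtain ⟨p1, p2, p3, p4, hp1, hp2, hp3, hp4, d12, d13, d14, d23, d24, d34⟩ :=
    four_points F h3F hL
  have tl : ∀ {p q : ℙ F (Fin (n + 1) → F)},
      p.submodule ≤ WL → q.submodule ≤ WL → p.submodule ≤ Wl → q.submodule ≤ Wl →
      p ≠ q → WL = Wl := by
    intro p q hpL hqL hpi hqi hpq
    rw [← line_eq_sup F hL hpL hqL hpq, line_eq_sup F hl hpi hqi hpq]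
  have m1 := h hp1
  have m2 := h hp2
  have m3 := h hp3
  have m4 := h hp4
  rcases m1 with m1 | m1 <;> rcases m2 with m2 | m2 <;> rcases m3 with m3 | m3 <;>
    rcases m4 with m4 | m4 <;>
    first
    | exact tl hp1 hp2 m1 m2 d12
    | exact tl hp1 hp3 m1 m3 d13
    | exact tl hp1 hp4 m1 m4 d14
    | exact tl hp2 hp3 m2 m3 d23
    | exact tl hp2 hp4 m2 m4 d24
    | exact tl hp3 hp4 m3 m4 d34
    | exact (conic_no_three F hC hL m1 m2 m3 hp1 hp2 hp3 d12 d13 d23).elim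
    | exact (conic_no_three F hC hL m1 m2 m4 hp1 hp2 hp4 d12 d14 d24).elim
    | exact (conic_no_three F hC hL m1 m3 m4 hp1 hp3 hp4 d13 d14 d34).elim
    | exact (conic_no_three F hC hL m2 m3 m4 hp2 hp3 hp4 d23 d24 d34).elim

end Helpers

/-- projecting `K` from a point `P` of the stick `m 0` (off the baseline)
onto a 3-space `Pi = ⟨b, t₁⟩` not through `P`, the images of the sticks
`m 1, ..., m q` are `q` pairwise skew lines. -/
theorem stmt7 (q : ℕ) (hq : Fintype.card F = q) (h3 : 3 ≤ q) (K : Set (PGPt F 4))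
    (hK : K.ncard = q ^ 2 + 2 * q + 1) (hyp : FiveTypeHyp F K)
    (m : Fin (q + 1) → Set (PGPt F 4)) (b : Set (PGPt F 4))
    (hsb : SticksAndBase F q K m b)
    (P : PGPt F 4) (hP0 : P ∈ m 0) (hPb : P ∉ b)
    (C1 : Set (PGPt F 4)) (hC1 : IsConic F 4 C1) (hC1K : C1 ⊆ K) (hPC1 : P ∈ C1)
    (π : Set (PGPt F 4)) (hπ : IsPlane F 4 π) (hC1π : C1 ⊆ π)
    (t1 : Set (PGPt F 4)) (ht1 : IsLine F 4 t1) (ht1π : t1 ⊆ π) (hPt1 : P ∉ t1)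
    (Pi : Set (PGPt F 4)) (hPi : IsSolid F Pi) (hbPi : b ⊆ Pi) (ht1Pi : t1 ⊆ Pi)
    (hPPi : P ∉ Pi) :
    (∀ j : Fin (q + 1), j ≠ 0 →
      IsLine F 4 {y ∈ Pi | ∃ x ∈ m j, y.submodule ≤ P.submodule ⊔ x.submodule}) ∧
    ∀ j k : Fin (q + 1), j ≠ 0 → k ≠ 0 → j ≠ k →
      Disjoint {y ∈ Pi | ∃ x ∈ m j, y.submodule ≤ P.submodule ⊔ x.submodule}
        {y ∈ Pi | ∃ x ∈ m k, y.submodule ≤ P.submodule ⊔ x.submodule} := by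
  classical
  obtain ⟨hml, hmd, hmu, hbl, hbK, hbnm, hbm⟩ := hsb
  choose Wm hWmr hWmE using hml
  obtain ⟨Wb, hWbr, hWbE⟩ := hbl
  obtain ⟨WPi, hWPir, hWPiE⟩ := hPi
  have h3F : 3 ≤ Fintype.card F := by rw [hq]; exact h3
  have hVr : Module.finrank F (Fin 5 → F) = 5 := Module.finrank_fin_fun F
  have hPnotle : ¬ P.submodule ≤ WPi := fun h => hPPi (by rw [hWPiE]; exact h)
  have hPm : ∀ j : Fin (q + 1), j ≠ 0 → ¬ P.submodule ≤ Wm j := by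
    intro j hj hle
    have hmem : P ∈ m j := by rw [hWmE j]; exact hle
    exact (Set.disjoint_left.mp (hmd 0 j (Ne.symm hj)) hP0) hmem
  have hmK : ∀ i : Fin (q + 1), m i ⊆ K := by
    intro i x hx
    rw [← hmu]
    exact Set.mem_iUnion.mpr ⟨i, hx⟩
  have hbotjk : ∀ a c : Fin (q + 1), a ≠ c → Wm a ⊓ Wm c = ⊥ := by
    intro a c hac
    by_contra hne
    obtain ⟨v, hv, hv0⟩ := Submodule.exists_mem_ne_zero_of_ne_bot hne
    have h1 : Projectivization.mk F v hv0 ∈ m a := by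
      rw [hWmE a, Set.mem_setOf_eq, Projectivization.submodule_mk,
        Submodule.span_singleton_le_iff_mem]
      exact (Submodule.mem_inf.mp hv).1
    have h2 : Projectivization.mk F v hv0 ∈ m c := by
      rw [hWmE c, Set.mem_setOf_eq, Projectivization.submodule_mk,
        Submodule.span_singleton_le_iff_mem]
      exact (Submodule.mem_inf.mp hv).2
    exact Set.disjoint_left.mp (hmd a c hac) h1 h2
  have hWne : ∀ a c : Fin (q + 1), a ≠ c → Wm a ≠ Wm c := by
    intro a c hac e
    have hb := hbotjk a c hac
    rw [e, inf_idem] at hb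
    have h2 := hWmr c
    rw [hb] at h2
    simp only [finrank_bot] at h2
    omega
  have hWbne : ∀ i : Fin (q + 1), Wb ≠ Wm i := by
    intro i e
    exact hbnm i (by rw [hWbE, hWmE i, e])
  have hmain : ∀ j : Fin (q + 1), j ≠ 0 →
      Module.finrank F ↥((P.submodule ⊔ Wm j) ⊓ WPi) = 2 ∧
      {y ∈ Pi | ∃ x ∈ m j, y.submodule ≤ P.submodule ⊔ x.submodule} =
        {p : PGPt F 4 | p.submodule ≤ (P.submodule ⊔ Wm j) ⊓ WPi} := by
    intro j hj
    have hplane : Module.finrank F ↥(P.submodule ⊔ Wm j) = 3 := by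
      rw [finrank_point_sup F (hPm j hj), hWmr j]
    have hrank : Module.finrank F ↥((P.submodule ⊔ Wm j) ⊓ WPi) = 2 := by
      have hge := finrank_inf_ge F (le_top : P.submodule ⊔ Wm j ≤ ⊤) (le_top : WPi ≤ ⊤)
      rw [finrank_top, hVr, hplane, hWPir] at hge
      have hlt : (P.submodule ⊔ Wm j) ⊓ WPi < P.submodule ⊔ Wm j := by
        refine lt_of_le_of_ne inf_le_left fun e => hPnotle ?_
        calc P.submodule ≤ P.submodule ⊔ Wm j := le_sup_left
          _ = (P.submodule ⊔ Wm j) ⊓ WPi := e.symm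
          _ ≤ WPi := inf_le_right
      have := Submodule.finrank_lt_finrank_of_lt hlt
      omega
    refine ⟨hrank, ?_⟩
    ext y
    simp only [Set.mem_setOf_eq, Set.mem_sep_iff]
    constructor
    · rintro ⟨hyPi, x, hxm, hyle⟩
      have hxW : x.submodule ≤ Wm j := by rw [hWmE j] at hxm; exact hxm
      refine le_inf (hyle.trans (sup_le_sup_left hxW _)) ?_
      rw [hWPiE] at hyPi
      exact hyPi
    · intro hy
      have hyPi : y ∈ Pi := by rw [hWPiE]; exact hy.trans inf_le_right
      refine ⟨hyPi, ?_⟩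
      have hyle : y.submodule ≤ P.submodule ⊔ Wm j := hy.trans inf_le_left
      have hyP : P ≠ y := by
        refine pt_ne_of_submodule_ne F fun e => hPnotle ?_
        rw [e]
        exact hy.trans inf_le_right
      have hA : Module.finrank F ↥(P.submodule ⊔ y.submodule) = 2 := finrank_sup_points F hyP
      have hAle : P.submodule ⊔ y.submodule ≤ P.submodule ⊔ Wm j := sup_le le_sup_left hyle
      have hU : 1 ≤ Module.finrank F ↥((P.submodule ⊔ y.submodule) ⊓ Wm j) := by
        have hge := finrank_inf_ge F hAle (le_sup_right : Wm j ≤ P.submodule ⊔ Wm j)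
        rw [hA, hWmr j, hplane] at hge
        omega
      have hUne : (P.submodule ⊔ y.submodule) ⊓ Wm j ≠ ⊥ := by
        intro e
        rw [e] at hU
        simp only [finrank_bot] at hU
        omega
      obtain ⟨v, hvU, hv0⟩ := Submodule.exists_mem_ne_zero_of_ne_bot hUne
      have hxsub : (Projectivization.mk F v hv0).submodule = Submodule.span F {v} :=
        Projectivization.submodule_mk v hv0
      have hxWm : (Projectivization.mk F v hv0).submodule ≤ Wm j := by
        rw [hxsub, Submodule.span_singleton_le_iff_mem]
        exact (Submodule.mem_inf.mp hvU).2
      have hxA : (Projectivization.mk F v hv0).submodule ≤ P.submodule ⊔ y.submodule := by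
        rw [hxsub, Submodule.span_singleton_le_iff_mem]
        exact (Submodule.mem_inf.mp hvU).1
      refine ⟨Projectivization.mk F v hv0, by rw [hWmE j]; exact hxWm, ?_⟩
      have hxP : P ≠ Projectivization.mk F v hv0 :=
        pt_ne_of_submodule_ne F fun e => hPm j hj (e ▸ hxWm)
      have heq : P.submodule ⊔ (Projectivization.mk F v hv0).submodule =
          P.submodule ⊔ y.submodule :=
        Submodule.eq_of_le_of_finrank_le (sup_le le_sup_left hxA)
          (by rw [hA, finrank_sup_points F hxP])
      rw [heq]
      exact le_sup_right
  constructor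
  · intro j hj
    exact ⟨(P.submodule ⊔ Wm j) ⊓ WPi, (hmain j hj).1, (hmain j hj).2⟩
  · intro j k hj hk hjk
    rw [Set.disjoint_left]
    rintro y ⟨hyPi, xj, hxjm, hylej⟩ ⟨-, xk, hxkm, hylek⟩
    have hyP : P ≠ y := by
      refine pt_ne_of_submodule_ne F fun e => hPnotle ?_
      rw [e]
      rw [hWPiE] at hyPi
      exact hyPi
    have hA : Module.finrank F ↥(P.submodule ⊔ y.submodule) = 2 := finrank_sup_points F hyP
    have hxjW : xj.submodule ≤ Wm j := by rw [hWmE j] at hxjm; exact hxjm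
    have hxkW : xk.submodule ≤ Wm k := by rw [hWmE k] at hxkm; exact hxkm
    have hxjP : P ≠ xj := pt_ne_of_submodule_ne F fun e => hPm j hj (e ▸ hxjW)
    have hxkP : P ≠ xk := pt_ne_of_submodule_ne F fun e => hPm k hk (e ▸ hxkW)
    have hAj : P.submodule ⊔ y.submodule = P.submodule ⊔ xj.submodule :=
      Submodule.eq_of_le_of_finrank_le (sup_le le_sup_left hylej)
        (by rw [hA, finrank_sup_points F hxjP])
    have hAk : P.submodule ⊔ y.submodule = P.submodule ⊔ xk.submodule :=
      Submodule.eq_of_le_of_finrank_le (sup_le le_sup_left hylek)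
        (by rw [hA, finrank_sup_points F hxkP])
    have hxjk : xj ≠ xk := fun e => Set.disjoint_left.mp (hmd j k hjk) hxjm (e ▸ hxkm)
    have hsupjk : xj.submodule ⊔ xk.submodule = P.submodule ⊔ y.submodule := by
      refine Submodule.eq_of_le_of_finrank_le (sup_le ?_ ?_) ?_
      · rw [hAj]; exact le_sup_right
      · rw [hAk]; exact le_sup_right
      · rw [hA, finrank_sup_points F hxjk]
    have hPle : P.submodule ≤ Wm j ⊔ Wm k := by
      have h1 : P.submodule ≤ xj.submodule ⊔ xk.submodule := by
        rw [hsupjk]; exact le_sup_left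
      exact h1.trans (sup_le (hxjW.trans le_sup_left) (hxkW.trans le_sup_right))
    have hW'r : Module.finrank F ↥(Wm j ⊔ Wm k) = 4 := by
      have hs := Submodule.finrank_sup_add_finrank_inf_eq (Wm j) (Wm k)
      rw [hbotjk j k hjk, hWmr j, hWmr k] at hs
      simp only [finrank_bot] at hs
      omega
    have hsolid : IsSolid F {p : PGPt F 4 | p.submodule ≤ Wm j ⊔ Wm k} :=
      ⟨Wm j ⊔ Wm k, by rw [hW'r], rfl⟩
    obtain ⟨yj, hyjb, hyjm⟩ := hbm j
    obtain ⟨yk, hykb, hykm⟩ := hbm k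
    have hyjk : yj ≠ yk := fun e => Set.disjoint_left.mp (hmd j k hjk) hyjm (e ▸ hykm)
    have hyjWb : yj.submodule ≤ Wb := by rw [hWbE] at hyjb; exact hyjb
    have hykWb : yk.submodule ≤ Wb := by rw [hWbE] at hykb; exact hykb
    have hWble : Wb ≤ Wm j ⊔ Wm k := by
      rw [← line_eq_sup F hWbr hyjWb hykWb hyjk]
      refine sup_le ?_ ?_
      · exact (by rw [hWmE j] at hyjm; exact hyjm : yj.submodule ≤ Wm j).trans le_sup_left
      · exact (by rw [hWmE k] at hykm; exact hykm : yk.submodule ≤ Wm k).trans le_sup_right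
    obtain ⟨Q, hQb, hQm0⟩ := hbm 0
    have hQP : P ≠ Q := fun e => hPb (e ▸ hQb)
    have hW0le : Wm 0 ≤ Wm j ⊔ Wm k := by
      have hPW0 : P.submodule ≤ Wm 0 := by rw [hWmE 0] at hP0; exact hP0
      have hQW0 : Q.submodule ≤ Wm 0 := by rw [hWmE 0] at hQm0; exact hQm0
      rw [← line_eq_sup F (hWmr 0) hPW0 hQW0 hQP]
      refine sup_le hPle ?_
      exact (by rw [hWbE] at hQb; exact hQb : Q.submodule ≤ Wb).trans hWble
    have hsubm : ∀ i : Fin (q + 1), Wm i ≤ Wm j ⊔ Wm k →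
        {p : PGPt F 4 | p.submodule ≤ Wm i} ⊆
          K ∩ {p : PGPt F 4 | p.submodule ≤ Wm j ⊔ Wm k} := by
      intro i hle p hp
      exact ⟨hmK i (by rw [hWmE i]; exact hp), hp.trans hle⟩
    have hsubb : {p : PGPt F 4 | p.submodule ≤ Wb} ⊆
        K ∩ {p : PGPt F 4 | p.submodule ≤ Wm j ⊔ Wm k} := by
      intro p hp
      exact ⟨hbK (by rw [hWbE]; exact hp), hp.trans hWble⟩
    have hWjle : Wm j ≤ Wm j ⊔ Wm k := le_sup_left
    have hWkle : Wm k ≤ Wm j ⊔ Wm k := le_sup_right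
    rcases hyp _ hsolid with hT | hT | hT | hT | hT
    · obtain ⟨ℓ, ⟨Wl, hWlr, hWlE⟩, hX⟩ := hT
      have e0 : Wm 0 = Wl := by
        refine W_eq_of_setle F (hWmr 0) hWlr ?_
        intro p hp
        have hh := hsubm 0 hW0le hp
        rw [hX, hWlE] at hh
        exact hh
      have ej : Wm j = Wl := by
        refine W_eq_of_setle F (hWmr j) hWlr ?_
        intro p hp
        have hh := hsubm j hWjle hp
        rw [hX, hWlE] at hh
        exact hh
      exact hWne 0 j (Ne.symm hj) (e0.trans ej.symm)
    · obtain ⟨ℓ, m', ⟨Wl, hWlr, hWlE⟩, ⟨Wn, hWnr, hWnE⟩, hne', hX⟩ := hT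
      have key : ∀ i : Fin (q + 1), Wm i ≤ Wm j ⊔ Wm k → Wm i = Wl ∨ Wm i = Wn := by
        intro i hle
        have hsub : {p : PGPt F 4 | p.submodule ≤ Wm i} ⊆
            {p : PGPt F 4 | p.submodule ≤ Wl} ∪ {p | p.submodule ≤ Wn} ∪
              {p | p.submodule ≤ Wn} := by
          intro p hp
          have hh := hsubm i hle hp
          rw [hX, hWlE, hWnE] at hh
          exact Or.inl hh
        rcases line_in_three_lines F h3F (hWmr i) hWlr hWnr hWnr hsub with e | e | e
        · exact Or.inl e
        · exact Or.inr e
        · exact Or.inr e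
      have keyb : Wb = Wl ∨ Wb = Wn := by
        have hsub : {p : PGPt F 4 | p.submodule ≤ Wb} ⊆
            {p : PGPt F 4 | p.submodule ≤ Wl} ∪ {p | p.submodule ≤ Wn} ∪
              {p | p.submodule ≤ Wn} := by
          intro p hp
          have hh := hsubb hp
          rw [hX, hWlE, hWnE] at hh
          exact Or.inl hh
        rcases line_in_three_lines F h3F hWbr hWlr hWnr hWnr hsub with e | e | e
        · exact Or.inl e
        · exact Or.inr e
        · exact Or.inr e
      rcases key 0 hW0le with e0 | e0 <;> rcases key j hWjle with ej | ej <;>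
        rcases keyb with eb | eb <;>
        first
        | exact hWne 0 j (Ne.symm hj) (e0.trans ej.symm)
        | exact hWbne 0 (eb.trans e0.symm)
        | exact hWbne j (eb.trans ej.symm)
    · obtain ⟨ℓ, m', n', ⟨Wl, hWlr, hWlE⟩, ⟨Wn, hWnr, hWnE⟩, ⟨Wo, hWor, hWoE⟩,
        hne1, hne2, hne3, hX⟩ := hT
      have key : ∀ i : Fin (q + 1), Wm i ≤ Wm j ⊔ Wm k →
          Wm i = Wl ∨ Wm i = Wn ∨ Wm i = Wo := by
        intro i hle
        refine line_in_three_lines F h3F (hWmr i) hWlr hWnr hWor ?_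
        intro p hp
        have hh := hsubm i hle hp
        rw [hX, hWlE, hWnE, hWoE] at hh
        exact hh
      have keyb : Wb = Wl ∨ Wb = Wn ∨ Wb = Wo := by
        refine line_in_three_lines F h3F hWbr hWlr hWnr hWor ?_
        intro p hp
        have hh := hsubb hp
        rw [hX, hWlE, hWnE, hWoE] at hh
        exact hh
      rcases key 0 hW0le with e0 | e0 | e0 <;> rcases key j hWjle with ej | ej | ej <;>
        rcases key k hWkle with ek | ek | ek <;> rcases keyb with eb | eb | eb <;>
        first
        | exact hWne 0 j (Ne.symm hj) (e0.trans ej.symm)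
        | exact hWne 0 k (Ne.symm hk) (e0.trans ek.symm)
        | exact hWne j k hjk (ej.trans ek.symm)
        | exact hWbne 0 (eb.trans e0.symm)
        | exact hWbne j (eb.trans ej.symm)
        | exact hWbne k (eb.trans ek.symm)
    · obtain ⟨ℓ, C, ⟨Wl, hWlr, hWlE⟩, hC, hX⟩ := hT
      have key : ∀ i : Fin (q + 1), Wm i ≤ Wm j ⊔ Wm k → Wm i = Wl := by
        intro i hle
        refine line_in_line_conic F h3F (hWmr i) hWlr hC ?_
        intro p hp
        have hh := hsubm i hle hp
        rw [hX, hWlE] at hh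
        exact hh
      exact hWne 0 j (Ne.symm hj) ((key 0 hW0le).trans (key j hWjle).symm)
    · obtain ⟨C, hC, hX⟩ := hT
      obtain ⟨p1, p2, p3, p4, hp1, hp2, hp3, hp4, d12, d13, d14, d23, d24, d34⟩ :=
        four_points F h3F (hWmr 0)
      have hin : ∀ p_ : PGPt F 4, p_.submodule ≤ Wm 0 → p_ ∈ C := by
        intro p_ hp
        have hh := hsubm 0 hW0le hp
        rw [hX] at hh
        exact hh
      exact cubic_no_three F hC (hWmr 0) (hin p1 hp1) (hin p2 hp2) (hin p3 hp3)
        hp1 hp2 hp3 d12 d13 d23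
end

section
/- Let K be a set of q^2+2q+1 points in PG(4,q), q ≥ 5, such that every 3-space meets K in one of the eight allowed types. Then there is no 3-space meeting K in exactly one point. -/
open Projectivization

variable (F : Type) [Field F] [Fintype F]

/-! Suppose a solid `Π` meets `K` only in `P`, and let `σ ⊆ Π` be a plane not through `P`.
A line of `K` lying in a solid through `σ` would meet `σ` in a point of `K ∩ Π = {P}` other
than `P`; so none of the `q + 1` solids through `σ` contains a line of `K`, and each meets `K`
in a twisted cubic or a point, i.e. in at most `q + 1` points. These solids cover `PG(4,q)` and
`Π` contributes only `P`, so `|K| ≤ 1 + q (q + 1) < (q + 1)²`. -/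

namespace Projectivization

open scoped LinearAlgebra.Projectivization

variable {k V : Type*} [DivisionRing k] [AddCommGroup V] [Module k V]

lemma submodule_le_iff_rep_mem {p : ℙ k V} {W : Submodule k V} :
    p.submodule ≤ W ↔ p.rep ∈ W := by
  rw [submodule_eq, Submodule.span_singleton_le_iff_mem]

lemma mk_submodule_le_iff {v : V} (hv : v ≠ 0) {W : Submodule k V} :
    (mk k v hv).submodule ≤ W ↔ v ∈ W := by
  rw [submodule_mk, Submodule.span_singleton_le_iff_mem]

lemma setOf_submodule_le_subset_iff {L W : Submodule k V} :
    {p : ℙ k V | p.submodule ≤ L} ⊆ {p | p.submodule ≤ W} ↔ L ≤ W := by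
  refine ⟨fun h v hv => ?_, fun h p hp => le_trans hp h⟩
  by_cases hv0 : v = 0
  · exact hv0 ▸ W.zero_mem
  · exact (mk_submodule_le_iff hv0).1 (h ((mk_submodule_le_iff hv0).2 hv))

lemma exists_submodule_le_inf_of_finrank_lt [FiniteDimensional k V] {L U T : Submodule k V}
    (hL : L ≤ T) (hU : U ≤ T)
    (hdim : Module.finrank k T < Module.finrank k L + Module.finrank k U) :
    ∃ p : ℙ k V, p.submodule ≤ L ⊓ U := by
  have hsup : Module.finrank k ↥(L ⊔ U) ≤ Module.finrank k T :=
    Submodule.finrank_mono (sup_le hL hU)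
  have hinf := Submodule.finrank_sup_add_finrank_inf_eq L U
  obtain ⟨w, hw, hw0⟩ := Submodule.exists_mem_ne_zero_of_ne_bot (p := L ⊓ U) (by
    intro hbot
    rw [hbot, finrank_bot] at hinf
    omega)
  exact ⟨mk k w hw0, (mk_submodule_le_iff hw0).2 hw⟩

end Projectivization

section Pencil

variable {k V : Type*} [Field k] [AddCommGroup V] [Module k V]

open Module LinearMap

lemma Module.Dual.exists_ne_zero_ker_eq [FiniteDimensional k V] {W : Submodule k V}
    (hW : finrank k W + 1 = finrank k V) : ∃ ψ : Dual k V, ψ ≠ 0 ∧ ker ψ = W := by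
  obtain ⟨x, hx⟩ : ∃ x, x ∉ W := by
    by_contra! h
    have : W = ⊤ := Submodule.eq_top_iff'.2 h
    rw [this, finrank_top] at hW
    omega
  obtain ⟨ψ, hψx, hψW⟩ := W.exists_dual_map_eq_bot_of_notMem hx inferInstance
  have hψ : ψ ≠ 0 := fun h => hψx (by simp [h])
  refine ⟨ψ, hψ, (Submodule.eq_of_le_of_finrank_eq ?_ ?_).symm⟩
  · exact le_ker_iff_map.2 hψW
  · have := Dual.finrank_ker_add_one_of_ne_zero hψ
    omega

lemma Module.Dual.finrank_le_finrank_ker_inf_ker_add_two [FiniteDimensional k V]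
    {χ ψ : Dual k V} (hχ : χ ≠ 0) (hψ : ψ ≠ 0) :
    finrank k V ≤ finrank k ↥(ker χ ⊓ ker ψ) + 2 := by
  have := Submodule.finrank_sup_add_finrank_inf_eq (ker χ) (ker ψ)
  have := Submodule.finrank_le (ker χ ⊔ ker ψ)
  have := Dual.finrank_ker_add_one_of_ne_zero hχ
  have := Dual.finrank_ker_add_one_of_ne_zero hψ
  omega

/-- When `χ` and `ψ` are independent, the kernels of these forms are the hyperplanes through
`ker χ ⊓ ker ψ`, indexed by `Option k ≃ ℙ¹(k)`. -/
def pencilForm (χ ψ : Dual k V) : Option k → Dual k V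
  | none => ψ
  | some t => χ - t • ψ

lemma exists_pencilForm_apply_eq_zero (χ ψ : Dual k V) (v : V) :
    ∃ o, pencilForm χ ψ o v = 0 := by
  by_cases hv : ψ v = 0
  · exact ⟨none, hv⟩
  · refine ⟨some (χ v / ψ v), ?_⟩
    simp [pencilForm, div_mul_cancel₀ _ hv]

lemma ker_inf_ker_le_ker_pencilForm (χ ψ : Dual k V) (o : Option k) :
    ker χ ⊓ ker ψ ≤ ker (pencilForm χ ψ o) := by
  rintro v ⟨hχ, hψ⟩
  cases o <;> simp_all [pencilForm]

lemma pencilForm_ne_zero {χ ψ : Dual k V} {v : V} (hχ : χ v ≠ 0) (hψv : ψ v = 0) (hψ : ψ ≠ 0)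
    (o : Option k) : pencilForm χ ψ o ≠ 0 := by
  cases o with
  | none => exact hψ
  | some t => exact fun h => hχ (by simpa [pencilForm, hψv] using congr($h v))

end Pencil

lemma Set.ncard_le_of_subset_iUnion_option {α ι : Type*} [Fintype ι] {K : Set α}
    {S : Option ι → Set α} (hK : K ⊆ ⋃ o, S o) {m : ℕ} (h : ∀ i, (K ∩ S (some i)).ncard ≤ m) :
    K.ncard ≤ (K ∩ S none).ncard + Fintype.card ι * m := by
  have hcover : K = ⋃ o ∈ (Finset.univ : Finset (Option ι)), K ∩ S o := by
    simp only [Finset.mem_univ, Set.iUnion_true, ← Set.inter_iUnion]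
    exact (Set.inter_eq_left.2 hK).symm
  calc K.ncard ≤ ∑ o, (K ∩ S o).ncard :=
        (congrArg Set.ncard hcover).trans_le (Finset.univ.set_ncard_biUnion_le _)
    _ = (K ∩ S none).ncard + ∑ i, (K ∩ S (some i)).ncard := Fintype.sum_option _
    _ ≤ (K ∩ S none).ncard + Fintype.card ι * m := by
      grw [Finset.sum_le_sum fun i _ => h i]
      simp

section TwistedCubic

open scoped LinearAlgebra.Projectivization

variable {k : Type*} [Field k]

def twistedCubicMap (x : Fin 2 → k) : Fin 4 → k :=
  ![x 0 ^ 3, x 0 ^ 2 * x 1, x 0 * x 1 ^ 2, x 1 ^ 3]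

lemma twistedCubicMap_smul (c : k) (x : Fin 2 → k) :
    twistedCubicMap (c • x) = c ^ 3 • twistedCubicMap x := by
  funext j
  fin_cases j <;> simp [twistedCubicMap] <;> ring

lemma twistedCubicMap_ne_zero {x : Fin 2 → k} (hx : x ≠ 0) : twistedCubicMap x ≠ 0 := by
  intro h
  have h0 : x 0 = 0 := pow_eq_zero_iff (n := 3) (by norm_num) |>.1 (congr_fun h 0)
  have h1 : x 1 = 0 := pow_eq_zero_iff (n := 3) (by norm_num) |>.1 (congr_fun h 3)
  exact hx (funext fun i => by fin_cases i <;> assumption)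

variable {F}

lemma IsTwistedCubic.ncard_le {n : ℕ} {C : Set (PGPt F n)} (hC : IsTwistedCubic F n C) :
    C.ncard ≤ Fintype.card F + 1 := by
  obtain ⟨f, hf, rfl⟩ := hC
  have hne (x : Fin 2 → F) (hx : x ≠ 0) : f (twistedCubicMap x) ≠ 0 :=
    (map_ne_zero_iff f hf).2 (twistedCubicMap_ne_zero hx)
  let g (x : ℙ F (Fin 2 → F)) : PGPt F n := mk F (f (twistedCubicMap x.rep)) (hne _ x.rep_nonzero)
  refine (Set.ncard_le_ncard ?_ (Set.finite_range g)).trans ?_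
  · rintro p ⟨a, b, hab, hp⟩
    have hx : ![a, b] ≠ 0 := by simpa [funext_iff, Fin.forall_fin_two, or_iff_not_and_not] using hab
    obtain ⟨c, hc⟩ := exists_smul_eq_mk_rep F ![a, b] hx
    refine ⟨mk F ![a, b] hx, submodule_injective ?_⟩
    rw [submodule_mk, hp, ← hc, Units.smul_def, twistedCubicMap_smul, map_smul,
      Submodule.span_singleton_smul_eq ((Units.isUnit c).pow 3)]
    rfl
  · calc (Set.range g).ncard ≤ Nat.card (ℙ F (Fin 2 → F)) :=
          (Nat.card_coe_set_eq _).symm.trans_le (Finite.card_range_le _)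
      _ = Fintype.card F + 1 := by
        rw [card_of_finrank_two F (Fin 2 → F) (by simp), Nat.card_eq_fintype_card]

end TwistedCubic

section SolidsOfPG4

variable {F}

open Module LinearMap

lemma isSolid_setOf_submodule_le_ker {k : Type} [Field k] {φ : Dual k (Fin (4 + 1) → k)}
    (hφ : φ ≠ 0) : IsSolid k {p : PGPt k 4 | p.submodule ≤ ker φ} := by
  refine ⟨ker φ, ?_, rfl⟩
  have := Dual.finrank_ker_add_one_of_ne_zero hφ
  simp only [finrank_fin_fun] at this
  omega

lemma EightTypeHyp.ncard_inter_le {K S : Set (PGPt F 4)} (hyp : EightTypeHyp F K)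
    (hS : IsSolid F S) (hS_lines : ∀ ℓ, IsLine F 4 ℓ → ¬ℓ ⊆ K ∩ S) :
    (K ∩ S).ncard ≤ Fintype.card F + 1 := by
  rcases hyp S hS with ⟨ℓ, hℓ, h⟩ | ⟨ℓ, _, hℓ, -, -, h⟩ | ⟨ℓ, _, _, hℓ, -, -, -, -, -, h⟩ |
    ⟨ℓ, _, hℓ, -, h⟩ | ⟨C, hC, h⟩ | ⟨P, h⟩ | ⟨_, ℓ, _, -, hℓ, -, -, h⟩ | ⟨ℓ, _, hℓ, -, h⟩
  all_goals try exact (hS_lines ℓ hℓ fun x hx => by rw [h]; simp [hx]).elim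
  · exact h ▸ hC.ncard_le
  · simp [h]

theorem EightTypeHyp.ncard_le_of_inter_eq_singleton {K Pi : Set (PGPt F 4)} {P : PGPt F 4}
    (hyp : EightTypeHyp F K) (hPi : IsSolid F Pi) (hKP : K ∩ Pi = {P}) :
    K.ncard ≤ 1 + Fintype.card F * (Fintype.card F + 1) := by
  obtain ⟨W, hW, rfl⟩ := hPi
  obtain ⟨ψ, hψ, rfl⟩ := Dual.exists_ne_zero_ker_eq (W := W) (by simp [hW])
  have hPψ : ψ P.rep = 0 := submodule_le_iff_rep_mem.1 (hKP.symm.subset rfl).2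
  obtain ⟨χ, hχ⟩ := Projective.exists_dual_ne_zero F P.rep_nonzero
  let S (o : Option F) : Set (PGPt F 4) := {p | p.submodule ≤ ker (pencilForm χ ψ o)}
  have hplane :=
    Dual.finrank_le_finrank_ker_inf_ker_add_two (χ := χ) (by rintro rfl; exact hχ rfl) hψ
  have hS_lines (o : Option F) (ℓ : Set (PGPt F 4)) (hℓ : IsLine F 4 ℓ) : ¬ℓ ⊆ K ∩ S o := by
    obtain ⟨L, hL, rfl⟩ := hℓ
    intro hℓ
    have hLS : L ≤ ker (pencilForm χ ψ o) :=
      setOf_submodule_le_subset_iff.1 fun p hp => (hℓ hp).2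
    have hsolid := Dual.finrank_ker_add_one_of_ne_zero (pencilForm_ne_zero hχ hPψ hψ o)
    obtain ⟨p, hp⟩ := exists_submodule_le_inf_of_finrank_lt hLS
      (ker_inf_ker_le_ker_pencilForm χ ψ o) (by omega)
    have hpP : p ∈ K ∩ {p | p.submodule ≤ ker ψ} :=
      ⟨(hℓ (hp.trans inf_le_left)).1, hp.trans (inf_le_right.trans inf_le_right)⟩
    rw [hKP, Set.mem_singleton_iff] at hpP
    exact hχ (submodule_le_iff_rep_mem.1 (hpP ▸ hp.trans (inf_le_right.trans inf_le_left)))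
  have hcover : K ⊆ ⋃ o, S o := fun p _ => Set.mem_iUnion.2 <|
    (exists_pencilForm_apply_eq_zero χ ψ p.rep).imp fun _ h => submodule_le_iff_rep_mem.2 h
  calc K.ncard ≤ (K ∩ S none).ncard + Fintype.card F * (Fintype.card F + 1) :=
        Set.ncard_le_of_subset_iUnion_option hcover fun t => hyp.ncard_inter_le
          (isSolid_setOf_submodule_le_ker (pencilForm_ne_zero hχ hPψ hψ _)) (hS_lines _)
    _ = 1 + Fintype.card F * (Fintype.card F + 1) := by
      rw [show S none = {p | p.submodule ≤ ker ψ} from rfl, hKP, Set.ncard_singleton]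

end SolidsOfPG4

theorem stmt11 (q : ℕ) (hq : Fintype.card F = q) (K : Set (PGPt F 4))
    (hK : K.ncard = q ^ 2 + 2 * q + 1) (hyp : EightTypeHyp F K) :
    ∀ Pi, IsSolid F Pi → ¬TypePoint F K Pi := by
  rintro Pi hPi ⟨P, hKP⟩
  have hle := hyp.ncard_le_of_inter_eq_singleton hPi hKP
  have hq0 : 0 < q := hq ▸ Fintype.card_pos
  rw [hK, hq] at hle
  nlinarith
end

section
/- Let K be a set of q^2+2q+1 points in PG(4,q), q ≥ 5, such that every 3-space meets K in one of the eight allowed types, and assume there are no 3-spaces meeting K in a conic plus two lines. Then there is no 3-space meeting K in a line together with a twisted cubic. -/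
open Projectivization

variable (F : Type) [Field F] [Fintype F]

/-!
The solid `Π` meets `K` in a line `ℓ` and a twisted cubic `C`, hence in at least `2q` points.
Three points of `C` off `ℓ` span a plane `τ ⊆ Π` not containing `ℓ`, so `K ∩ τ` has exactly four
points. Any other solid `Σ ⊇ τ` thus contains four points of `K` in a plane: a line of `K` through
two of them would lie in `τ`, a conic through three of them lies in `τ`, and a twisted cubic has at
most three points in a plane. As the type conic plus two lines is excluded, `K ∩ Σ` is a line and
a twisted cubic, with at least `2q` points.
The `q` solids `Σ ≠ Π` through `τ` are disjoint outside `Π`, whence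
`q ^ 2 + 2q + 1 = |K| ≥ 2q + q (2q - 4)`, which fails for `q ≥ 5`.
-/

open scoped LinearAlgebra.Projectivization
open Submodule Module

namespace CubicScroll

section PointsOf

variable {𝕜 V : Type*} [Field 𝕜] [AddCommGroup V] [Module 𝕜 V]

def pointsOf (W : Submodule 𝕜 V) : Set (ℙ 𝕜 V) := {p | p.submodule ≤ W}

variable {W W' : Submodule 𝕜 V}

lemma mem_pointsOf {p : ℙ 𝕜 V} : p ∈ pointsOf W ↔ p.submodule ≤ W := Iff.rfl

lemma mem_pointsOf_iff_rep_mem {p : ℙ 𝕜 V} : p ∈ pointsOf W ↔ p.rep ∈ W := by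
  rw [mem_pointsOf, p.submodule_eq, span_singleton_le_iff_mem]

lemma mk_mem_pointsOf {v : V} (hv : v ≠ 0) : mk 𝕜 v hv ∈ pointsOf W ↔ v ∈ W := by
  rw [mem_pointsOf, submodule_mk, span_singleton_le_iff_mem]

lemma pointsOf_mono (h : W ≤ W') : pointsOf W ⊆ pointsOf W' := fun _ hp => hp.trans h

lemma pointsOf_inf : pointsOf (W ⊓ W') = pointsOf W ∩ pointsOf W' :=
  Set.ext fun p => show p.submodule ≤ W ⊓ W' ↔ _ from le_inf_iff

lemma pointsOf_subset_pointsOf_iff : pointsOf W ⊆ pointsOf W' ↔ W ≤ W' := by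
  refine ⟨fun h v hv => ?_, pointsOf_mono⟩
  rcases eq_or_ne v 0 with rfl | hv0
  · exact W'.zero_mem
  · exact (mk_mem_pointsOf hv0).1 (h ((mk_mem_pointsOf hv0).2 hv))

lemma range_map_subtype : Set.range (map W.subtype W.injective_subtype) = pointsOf W := by
  ext p
  refine ⟨?_, fun hp => ?_⟩
  · rintro ⟨x, rfl⟩
    induction x using Projectivization.ind with
    | h v hv => exact (mk_mem_pointsOf _).2 v.2
  · refine ⟨mk 𝕜 ⟨p.rep, mem_pointsOf_iff_rep_mem.1 hp⟩ fun h => p.rep_nonzero congr($h.1), ?_⟩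
    rw [map_mk]
    exact p.mk_rep

lemma ncard_pointsOf_of_finrank_eq_one [FiniteDimensional 𝕜 V] (h : finrank 𝕜 W = 1) :
    (pointsOf W).ncard = 1 := by
  rw [Set.ncard_eq_one]
  refine ⟨mk'' W h, Set.ext fun p => ?_⟩
  rw [Set.mem_singleton_iff, mem_pointsOf, ← submodule_injective.eq_iff, submodule_mk'']
  exact ⟨fun hle => eq_of_le_of_finrank_eq hle (by rw [finrank_submodule, h]), le_of_eq⟩

lemma ncard_pointsOf_of_finrank_eq_two [Fintype 𝕜] (h : finrank 𝕜 W = 2) :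
    (pointsOf W).ncard = Fintype.card 𝕜 + 1 := by
  rw [← range_map_subtype, Set.ncard_range_of_injective (map_injective _ _),
    card_of_finrank_two 𝕜 W h, Nat.card_eq_fintype_card]

end PointsOf

section Independence

variable {𝕜 V ι : Type*} [Field 𝕜] [AddCommGroup V] [Module 𝕜 V] {P : ι → ℙ 𝕜 V}
  {W W' : Submodule 𝕜 V}

lemma finrank_span_rep [Finite ι] (hP : Independent P) :
    finrank 𝕜 (span 𝕜 (Set.range (Projectivization.rep ∘ P))) = Nat.card ι := by
  have := Fintype.ofFinite ι
  rw [finrank_span_eq_card (independent_iff.1 hP), Nat.card_eq_fintype_card]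

lemma span_rep_le (hW : ∀ i, P i ∈ pointsOf W) :
    span 𝕜 (Set.range (Projectivization.rep ∘ P)) ≤ W :=
  span_le.2 <| Set.range_subset_iff.2 fun i => mem_pointsOf_iff_rep_mem.1 (hW i)

lemma card_le_finrank_of_independent [FiniteDimensional 𝕜 V] [Finite ι] (hP : Independent P)
    (hW : ∀ i, P i ∈ pointsOf W) : Nat.card ι ≤ finrank 𝕜 W :=
  finrank_span_rep hP ▸ finrank_mono (span_rep_le hW)

lemma le_of_independent [FiniteDimensional 𝕜 V] [Finite ι] (hP : Independent P)
    (hW : ∀ i, P i ∈ pointsOf W) (hW' : ∀ i, P i ∈ pointsOf W') (h : finrank 𝕜 W ≤ Nat.card ι) :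
    W ≤ W' := by
  have hspan : span 𝕜 (Set.range (Projectivization.rep ∘ P)) = W :=
    eq_of_le_of_finrank_le (span_rep_le hW) (finrank_span_rep hP ▸ h)
  exact hspan ▸ span_rep_le hW'

lemma le_of_ne_of_mem_pointsOf [FiniteDimensional 𝕜 V] (hW : finrank 𝕜 W = 2) {p p' : ℙ 𝕜 V}
    (hne : p ≠ p') (hp : p ∈ pointsOf W) (hp' : p' ∈ pointsOf W) (hpW : p ∈ pointsOf W')
    (hp'W : p' ∈ pointsOf W') : W ≤ W' :=
  le_of_independent ((independent_pair_iff_ne p p').2 hne) (by simp [Fin.forall_fin_two, *])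
    (by simp [Fin.forall_fin_two, *]) (by simp [hW])

end Independence

section NormalCurve

variable {𝕜 V : Type*} [Field 𝕜] [AddCommGroup V] [Module 𝕜 V] {n : ℕ}

/-- The rows of `Matrix.projVandermonde b a`. -/
def curveVec (a b : 𝕜) : Fin n → 𝕜 := fun j => b ^ (j : ℕ) * a ^ (j.rev : ℕ)

lemma curveVec_smul (l a b : 𝕜) :
    curveVec (n := n) (l * a) (l * b) = l ^ (n - 1) • curveVec a b := by
  funext j
  have hj : (j : ℕ) + j.rev = n - 1 := by rw [Fin.val_rev]; omega
  simp only [curveVec, Pi.smul_apply, smul_eq_mul, mul_pow, ← hj, pow_add]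
  ring

lemma curveVec_ne_zero {a b : 𝕜} (h : a ≠ 0 ∨ b ≠ 0) : curveVec (n := n + 1) a b ≠ 0 := by
  intro h0
  rcases h with h | h
  · simpa [curveVec, h] using congrFun h0 0
  · simpa [curveVec, h] using congrFun h0 (Fin.last n)

lemma curveVec_three (a b : 𝕜) : curveVec a b = ![a ^ 2, a * b, b ^ 2] := by
  funext j
  fin_cases j <;> simp [curveVec, mul_comm]

lemma curveVec_four (a b : 𝕜) : curveVec a b = ![a ^ 3, a ^ 2 * b, a * b ^ 2, b ^ 3] := by
  funext j
  fin_cases j <;> simp [curveVec, mul_comm]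

lemma linearIndependent_curveVec {a b : Fin n → 𝕜}
    (h : Pairwise fun i j => b j * a i - b i * a j ≠ 0) :
    LinearIndependent 𝕜 fun i => curveVec (n := n) (a i) (b i) := by
  have hdet : (Matrix.projVandermonde b a).det ≠ 0 := by
    rw [Matrix.det_projVandermonde]
    exact Finset.prod_ne_zero_iff.2 fun i _ => Finset.prod_ne_zero_iff.2 fun j hj =>
      h (Finset.mem_Ioi.1 hj).ne
  exact Matrix.linearIndependent_rows_iff_isUnit.2 ((Matrix.isUnit_iff_isUnit_det _).2 hdet.isUnit)

lemma exists_eq_mul_of_mul_sub_mul_eq_zero {a b a' b' : 𝕜} (h0 : a ≠ 0 ∨ b ≠ 0)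
    (h : b' * a - b * a' = 0) : ∃ l : 𝕜, a' = l * a ∧ b' = l * b := by
  rcases eq_or_ne a 0 with rfl | ha
  · have hb := h0.resolve_left (not_not.2 rfl)
    refine ⟨b' / b, ?_, by field_simp⟩
    simpa [hb] using h
  · refine ⟨a' / a, by field_simp, ?_⟩
    field_simp
    linear_combination h

def normalCurve (f : (Fin n → 𝕜) →ₗ[𝕜] V) : Set (ℙ 𝕜 V) :=
  {p | ∃ a b : 𝕜, (a ≠ 0 ∨ b ≠ 0) ∧ p.submodule = 𝕜 ∙ f (curveVec a b)}

variable {f : (Fin n → 𝕜) →ₗ[𝕜] V}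

lemma mul_sub_mul_ne_zero_of_ne {p p' : ℙ 𝕜 V} {a b a' b' : 𝕜} (h0 : a ≠ 0 ∨ b ≠ 0)
    (h0' : a' ≠ 0 ∨ b' ≠ 0) (hp : p.submodule = 𝕜 ∙ f (curveVec a b))
    (hp' : p'.submodule = 𝕜 ∙ f (curveVec a' b')) (hne : p ≠ p') : b' * a - b * a' ≠ 0 := by
  intro h
  obtain ⟨l, rfl, rfl⟩ := exists_eq_mul_of_mul_sub_mul_eq_zero h0 h
  have hl : l ≠ 0 := by rintro rfl; simp at h0'
  refine hne (submodule_injective ?_)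
  rw [hp, hp', curveVec_smul, map_smul, span_singleton_smul_eq (IsUnit.mk0 _ (pow_ne_zero _ hl))]

lemma independent_of_mem_normalCurve (hf : Function.Injective f) {P : Fin n → ℙ 𝕜 V}
    (hP : Function.Injective P) (hC : ∀ i, P i ∈ normalCurve f) : Independent P := by
  choose a b hab hPab using hC
  have li : LinearIndependent 𝕜 fun i => f (curveVec (a i) (b i)) :=
    (linearIndependent_curveVec fun i j hij => mul_sub_mul_ne_zero_of_ne (hab i) (hab j)
      (hPab i) (hPab j) (hP.ne hij)).map' f (LinearMap.ker_eq_bot.2 hf)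
  have hP' : P = fun i => mk 𝕜 _ (li.ne_zero i) :=
    funext fun i => submodule_injective (by rw [submodule_mk, hPab i])
  exact hP' ▸ Independent.mk _ _ li

lemma exists_smul_eq_of_mk_eq (hf : Function.Injective f) {x y : Fin n → 𝕜} (hx : f x ≠ 0)
    (hy : f y ≠ 0) (h : mk 𝕜 (f x) hx = mk 𝕜 (f y) hy) : ∃ t : 𝕜, t • y = x := by
  obtain ⟨t, ht⟩ := (mk_eq_mk_iff' _ _ _ _ _).1 h
  exact ⟨t, hf (by rw [map_smul, ht])⟩

lemma card_add_one_le_ncard_normalCurve [Fintype 𝕜] [FiniteDimensional 𝕜 V]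
    {f : (Fin (n + 2) → 𝕜) →ₗ[𝕜] V} (hf : Function.Injective f) :
    Fintype.card 𝕜 + 1 ≤ (normalCurve f).ncard := by
  have : Finite V := Module.finite_of_finite 𝕜
  have hne {a b : 𝕜} (h : a ≠ 0 ∨ b ≠ 0) : f (curveVec a b) ≠ 0 :=
    (map_ne_zero_iff f hf).2 (curveVec_ne_zero h)
  -- the points with parameters `(0, 1)` and `(1, c)`, told apart by the first two coordinates
  let φ : Option 𝕜 → ℙ 𝕜 V := fun o =>
    o.elim (mk 𝕜 _ (hne (a := 0) (b := 1) (Or.inr one_ne_zero)))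
      fun c => mk 𝕜 _ (hne (a := 1) (b := c) (Or.inl one_ne_zero))
  have hφ : Function.Injective φ := by
    rintro (_ | c) (_ | c') h <;> obtain ⟨t, ht⟩ := exists_smul_eq_of_mk_eq hf _ _ h
    · rfl
    · have h0 := congrFun ht 0
      have hl := congrFun ht (Fin.last _)
      simp [curveVec] at h0 hl
      simp [h0] at hl
    · simpa [curveVec] using congrFun ht 0
    · have h0 := congrFun ht 0
      have h1 := congrFun ht 1
      simp [curveVec] at h0 h1
      simp [h0] at h1
      rw [h1]
  have hsub : Set.range φ ⊆ normalCurve f := by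
    rintro _ ⟨_ | c, rfl⟩
    · exact ⟨0, 1, Or.inr one_ne_zero, submodule_mk _ _⟩
    · exact ⟨1, c, Or.inl one_ne_zero, submodule_mk _ _⟩
  calc Fintype.card 𝕜 + 1 = (Set.range φ).ncard := by
        rw [Set.ncard_range_of_injective hφ, Nat.card_eq_fintype_card, Fintype.card_option]
    _ ≤ (normalCurve f).ncard := Set.ncard_le_ncard hsub

variable [Finite 𝕜] [FiniteDimensional 𝕜 V]

lemma independent_of_subset_normalCurve (hf : Function.Injective f)
    (hn : n ≤ (normalCurve f).ncard) {S : Set (ℙ 𝕜 V)} (hS : S ⊆ normalCurve f)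
    (hSn : S.ncard ≤ n) : Independent ((↑) : S → ℙ 𝕜 V) := by
  have : Finite V := Module.finite_of_finite 𝕜
  obtain ⟨T, hST, hT, hTn⟩ := Set.exists_subsuperset_card_eq hS hSn hn
  let e : T ≃ Fin n := Finite.equivFinOfCardEq hTn
  have hT : Independent fun i => (e.symm i : ℙ 𝕜 V) :=
    independent_of_mem_normalCurve hf (Subtype.val_injective.comp e.symm.injective)
      fun i => hT (e.symm i).2
  rw [independent_iff] at hT ⊢
  simpa [Function.comp_def] using hT.comp (fun s : S => e ⟨s, hST s.2⟩)
    (e.injective.comp fun s s' h => Subtype.ext congr($h.1))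

lemma ncard_normalCurve_inter_pointsOf_le (hf : Function.Injective f)
    (hn : n ≤ (normalCurve f).ncard) {W : Submodule 𝕜 V} (hW : finrank 𝕜 W < n) :
    (normalCurve f ∩ pointsOf W).ncard ≤ finrank 𝕜 W := by
  have : Finite V := Module.finite_of_finite 𝕜
  by_contra! hlt
  obtain ⟨S, hS, hScard⟩ := Set.exists_subset_card_eq hlt
  have := card_le_finrank_of_independent
    (independent_of_subset_normalCurve hf hn (hS.trans Set.inter_subset_left) (by omega))
    fun s => (hS s.2).2
  rw [Nat.card_coe_set_eq] at this
  omega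

lemma normalCurve_subset_pointsOf (hf : Function.Injective f) (hn : n ≤ (normalCurve f).ncard)
    {W : Submodule 𝕜 V} (hW : n ≤ (normalCurve f ∩ pointsOf W).ncard) :
    normalCurve f ⊆ pointsOf W := by
  have : Finite V := Module.finite_of_finite 𝕜
  obtain ⟨S, hS, hScard⟩ := Set.exists_subset_card_eq hW
  have hrange : normalCurve f ⊆ pointsOf (LinearMap.range f) := by
    rintro p ⟨a, b, -, hp⟩
    rw [mem_pointsOf, hp, span_singleton_le_iff_mem]
    exact LinearMap.mem_range_self f _
  have hle : LinearMap.range f ≤ W :=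
    le_of_independent (independent_of_subset_normalCurve hf hn (hS.trans Set.inter_subset_left)
      hScard.le) (fun s => hrange (hS s.2).1) (fun s => (hS s.2).2)
      (by rw [LinearMap.finrank_range_of_inj hf, Nat.card_coe_set_eq, hScard]; simp)
  exact hrange.trans (pointsOf_mono hle)

end NormalCurve

section Pencil

variable {𝕜 V : Type*} [Field 𝕜] [AddCommGroup V] [Module 𝕜 V] {L τ H E : Submodule 𝕜 V}
  {x u w : V}

lemma sup_span_singleton_inf_eq (hτ : τ ≤ H) (hx : x ∉ H) : (τ ⊔ 𝕜 ∙ x) ⊓ H = τ := by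
  have hx0 : x ≠ 0 := fun h => hx (h ▸ H.zero_mem)
  rw [sup_inf_assoc_of_le _ hτ, ((disjoint_span_singleton' hx0).2 hx).symm.eq_bot, sup_bot_eq]

lemma sup_span_singleton_eq [FiniteDimensional 𝕜 V] (hτE : τ ≤ E)
    (hE : finrank 𝕜 E = finrank 𝕜 τ + 1) (hx : x ∈ E) (hxτ : x ∉ τ) : τ ⊔ 𝕜 ∙ x = E :=
  eq_of_le_of_finrank_eq (sup_le hτE ((span_singleton_le_iff_mem _ _).2 hx))
    (by rw [finrank_sup_span_singleton hxτ, hE])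

/-- For a hyperplane `τ` of `H`, `u ∈ H \ τ` and `w ∉ H`, these are the hyperplanes of
`H ⊔ 𝕜 ∙ w` through `τ` other than `H`. -/
def pencil (τ : Submodule 𝕜 V) (u w : V) (c : 𝕜) : Submodule 𝕜 V := τ ⊔ 𝕜 ∙ (w + c • u)

lemma add_smul_notMem (hu : u ∈ H) (hw : w ∉ H) (c : 𝕜) : w + c • u ∉ H := fun h =>
  hw (by simpa using H.sub_mem h (H.smul_mem c hu))

lemma le_pencil (c : 𝕜) : τ ≤ pencil τ u w c := le_sup_left

lemma pencil_inf_eq (hτ : τ ≤ H) (hu : u ∈ H) (hw : w ∉ H) (c : 𝕜) :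
    pencil τ u w c ⊓ H = τ :=
  sup_span_singleton_inf_eq hτ (add_smul_notMem hu hw c)

lemma finrank_pencil [FiniteDimensional 𝕜 V] (hτ : τ ≤ H) (hu : u ∈ H) (hw : w ∉ H) (c : 𝕜) :
    finrank 𝕜 (pencil τ u w c) = finrank 𝕜 τ + 1 :=
  finrank_sup_span_singleton fun h => add_smul_notMem hu hw c (hτ h)

lemma pencil_inf_pencil_le [FiniteDimensional 𝕜 V] (hτ : τ ≤ H) (hu : u ∈ H) (huτ : u ∉ τ)
    (hw : w ∉ H) {c c' : 𝕜} (hcc : c ≠ c') : pencil τ u w c ⊓ pencil τ u w c' ≤ τ := by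
  by_contra hle
  obtain ⟨y, ⟨hy, hy'⟩, hyτ⟩ := SetLike.not_le_iff_exists.1 hle
  have heq : pencil τ u w c = pencil τ u w c' :=
    (sup_span_singleton_eq (le_pencil c) (finrank_pencil hτ hu hw c) hy hyτ).symm.trans
      (sup_span_singleton_eq (le_pencil c') (finrank_pencil hτ hu hw c') hy' hyτ)
  have hmem : ∀ c'', w + c'' • u ∈ pencil τ u w c'' := fun _ =>
    mem_sup_right (mem_span_singleton_self _)
  have hcu : (c - c') • u ∈ pencil τ u w c := by
    have := sub_mem (hmem c) (heq ▸ hmem c')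
    rwa [add_sub_add_left_eq_sub, ← sub_smul] at this
  exact huτ ((pencil_inf_eq hτ hu hw c).le
    ⟨(smul_mem_iff _ (sub_ne_zero.2 hcc)).1 hcu, hu⟩)

lemma finrank_inf_eq_one [FiniteDimensional 𝕜 V] (hL : finrank 𝕜 L = 2) (hτ : finrank 𝕜 τ = 3)
    (hH : finrank 𝕜 H = 4) (hLH : L ≤ H) (hτH : τ ≤ H) (hLτ : ¬L ≤ τ) : finrank 𝕜 ↥(L ⊓ τ) = 1 := by
  have hsum := finrank_sup_add_finrank_inf_eq L τ
  have hsup := finrank_mono (sup_le hLH hτH)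
  have hinf := finrank_mono (inf_le_left : L ⊓ τ ≤ L)
  have hne : finrank 𝕜 ↥(L ⊓ τ) ≠ 2 := fun h =>
    hLτ (eq_of_le_of_finrank_eq inf_le_left (h.trans hL.symm) ▸ inf_le_right)
  omega

end Pencil

section Counting

variable {𝕜 V : Type*} [Field 𝕜] [Fintype 𝕜] [AddCommGroup V] [Module 𝕜 V]
  [FiniteDimensional 𝕜 V] {τ H : Submodule 𝕜 V} {u w : V}

/-- The members of the pencil meet `H` and each other only in `τ`. -/
lemma ncard_inter_add_sum_ncard_inter_pencil_le (hτ : τ ≤ H) (hu : u ∈ H) (huτ : u ∉ τ)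
    (hw : w ∉ H) (K : Set (ℙ 𝕜 V)) :
    (K ∩ pointsOf H).ncard + ∑ c, (K ∩ pointsOf (pencil τ u w c)).ncard ≤
      K.ncard + Fintype.card 𝕜 * (K ∩ pointsOf τ).ncard := by
  have : Finite V := Module.finite_of_finite 𝕜
  set A : 𝕜 → Set (ℙ 𝕜 V) := fun c => (K ∩ pointsOf (pencil τ u w c)) \ pointsOf H
  have hsplit (c : 𝕜) :
      (K ∩ pointsOf (pencil τ u w c)).ncard = (A c).ncard + (K ∩ pointsOf τ).ncard := by
    have hinter : K ∩ pointsOf (pencil τ u w c) ∩ pointsOf H = K ∩ pointsOf τ := by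
      rw [Set.inter_assoc, ← pointsOf_inf, pencil_inf_eq hτ hu hw]
    rw [← Set.ncard_inter_add_ncard_sdiff_eq_ncard _ (pointsOf H), hinter, add_comm]
  have hdisj : Pairwise (Function.onFun Disjoint A) := fun c c' hcc =>
    Set.disjoint_left.2 fun p hp hp' => hp.2 <|
      pointsOf_mono ((pencil_inf_pencil_le hτ hu huτ hw hcc).trans hτ)
        (mem_pointsOf.2 (le_inf hp.1.2 hp'.1.2))
  have hA : (⋃ c, A c).ncard = ∑ c, (A c).ncard := by
    rw [Set.ncard_iUnion_of_finite (fun _ => Set.toFinite _) hdisj, finsum_eq_sum_of_fintype]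
  have hK : (K ∩ pointsOf H).ncard + (⋃ c, A c).ncard ≤ K.ncard := by
    rw [← Set.ncard_union_eq (Set.disjoint_iUnion_right.2 fun c =>
      Set.disjoint_left.2 fun p hp hp' => hp'.2 hp.2)]
    exact Set.ncard_le_ncard (Set.union_subset Set.inter_subset_left
      (Set.iUnion_subset fun c p hp => hp.1.1))
  simp only [hsplit, Finset.sum_add_distrib, Finset.sum_const, Finset.card_univ, smul_eq_mul]
  omega

end Counting

section LineAndTwistedCubic

variable {𝕜 V : Type*} [Field 𝕜] [Fintype 𝕜] [AddCommGroup V] [Module 𝕜 V]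
  [FiniteDimensional 𝕜 V] {f : (Fin 4 → 𝕜) →ₗ[𝕜] V} {L τ H : Submodule 𝕜 V}

lemma four_le_ncard_normalCurve (h3 : 3 ≤ Fintype.card 𝕜) (hf : Function.Injective f) :
    4 ≤ (normalCurve f).ncard :=
  le_trans (by omega) (card_add_one_le_ncard_normalCurve hf)

lemma ncard_normalCurve_inter_line_le_two (h3 : 3 ≤ Fintype.card 𝕜) (hf : Function.Injective f)
    (hL : finrank 𝕜 L = 2) : (normalCurve f ∩ pointsOf L).ncard ≤ 2 :=
  hL ▸ ncard_normalCurve_inter_pointsOf_le hf (four_le_ncard_normalCurve h3 hf) (by omega)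

lemma two_mul_le_ncard_pointsOf_union_normalCurve (h3 : 3 ≤ Fintype.card 𝕜)
    (hf : Function.Injective f) (hL : finrank 𝕜 L = 2) :
    2 * Fintype.card 𝕜 ≤ (pointsOf L ∪ normalCurve f).ncard := by
  have := Module.finite_of_finite 𝕜 (M := V)
  have hunion := Set.ncard_union_add_ncard_inter (pointsOf L) (normalCurve f)
  have hC := card_add_one_le_ncard_normalCurve hf
  have hCL := ncard_normalCurve_inter_line_le_two h3 hf hL
  rw [ncard_pointsOf_of_finrank_eq_two hL, Set.inter_comm] at hunion
  omega

lemma exists_plane_inter_normalCurve_eq (h3 : 3 ≤ Fintype.card 𝕜) (hf : Function.Injective f)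
    (hC : normalCurve f ⊆ pointsOf H) {S : Set (ℙ 𝕜 V)} (hS : S ⊆ normalCurve f)
    (hS3 : S.ncard = 3) :
    ∃ τ : Submodule 𝕜 V, finrank 𝕜 τ = 3 ∧ τ ≤ H ∧ normalCurve f ∩ pointsOf τ = S := by
  have := Module.finite_of_finite 𝕜 (M := V)
  have hind := independent_of_subset_normalCurve hf (four_le_ncard_normalCurve h3 hf) hS
    (by omega)
  set τ := span 𝕜 (Set.range (Projectivization.rep ∘ ((↑) : S → ℙ 𝕜 V)))
  have hτ : finrank 𝕜 τ = 3 := by rw [finrank_span_rep hind, Nat.card_coe_set_eq, hS3]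
  have hSτ : S ⊆ normalCurve f ∩ pointsOf τ := fun p hp =>
    ⟨hS hp, mem_pointsOf_iff_rep_mem.2 (subset_span ⟨⟨p, hp⟩, rfl⟩)⟩
  have hCτ := ncard_normalCurve_inter_pointsOf_le hf (four_le_ncard_normalCurve h3 hf)
    (hτ.trans_lt (by norm_num))
  exact ⟨τ, hτ, span_rep_le fun s => hC (hS s.2),
    (Set.eq_of_subset_of_ncard_le hSτ (by omega)).symm⟩

lemma exists_plane_inter_normalCurve_off_line (h5 : 5 ≤ Fintype.card 𝕜)
    (hf : Function.Injective f) (hL : finrank 𝕜 L = 2) (hC : normalCurve f ⊆ pointsOf H) :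
    ∃ τ : Submodule 𝕜 V, finrank 𝕜 τ = 3 ∧ τ ≤ H ∧ ¬L ≤ τ ∧
      Disjoint (normalCurve f ∩ pointsOf τ) (pointsOf L) ∧
      (normalCurve f ∩ pointsOf τ).ncard = 3 := by
  have := Module.finite_of_finite 𝕜 (M := V)
  have hC4 := four_le_ncard_normalCurve (by omega) hf
  have hD : 4 ≤ (normalCurve f \ pointsOf L).ncard := by
    have := Set.ncard_inter_add_ncard_sdiff_eq_ncard (normalCurve f) (pointsOf L)
    have := card_add_one_le_ncard_normalCurve hf
    have := ncard_normalCurve_inter_line_le_two (by omega) hf hL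
    omega
  obtain ⟨p, hp⟩ : (normalCurve f \ pointsOf L).Nonempty :=
    Set.nonempty_of_ncard_ne_zero (by omega)
  have hpL : p.rep ∉ L := fun h => hp.2 (mem_pointsOf_iff_rep_mem.2 h)
  -- the plane `L ⊔ p` holds at most three points of the curve, so some `p₃` lies off it
  have hLp := ncard_normalCurve_inter_pointsOf_le hf hC4 (W := L ⊔ 𝕜 ∙ p.rep)
    (by rw [finrank_sup_span_singleton hpL, hL]; norm_num)
  rw [finrank_sup_span_singleton hpL, hL] at hLp
  obtain ⟨p₃, hp₃, hp₃L⟩ := Set.exists_mem_notMem_of_ncard_lt_ncard (hLp.trans_lt hD)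
  obtain ⟨p₂, hp₂, hp₂'⟩ := Set.exists_mem_notMem_of_ncard_lt_ncard
    (((Set.ncard_insert_le p {p₃}).trans_eq (by rw [Set.ncard_singleton])).trans_lt
      (lt_of_lt_of_le (by norm_num) hD))
  have hpp₃ : p ≠ p₃ := by
    rintro rfl
    exact hp₃L ⟨hp.1, mem_pointsOf_iff_rep_mem.2 (mem_sup_right (mem_span_singleton_self _))⟩
  simp only [Set.mem_insert_iff, Set.mem_singleton_iff, not_or] at hp₂'
  have hS3 : ({p, p₂, p₃} : Set (ℙ 𝕜 V)).ncard = 3 :=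
    Set.ncard_eq_three.2 ⟨p, p₂, p₃, Ne.symm hp₂'.1, hpp₃, hp₂'.2, rfl⟩
  have hSD : ({p, p₂, p₃} : Set (ℙ 𝕜 V)) ⊆ normalCurve f \ pointsOf L := by
    simp [Set.insert_subset_iff, hp, hp₂, hp₃]
  obtain ⟨τ, hτ, hτH, hCτ⟩ :=
    exists_plane_inter_normalCurve_eq (by omega) hf hC (hSD.trans Set.sdiff_subset) hS3
  have hSτ : ∀ q ∈ ({p, p₂, p₃} : Set (ℙ 𝕜 V)), q ∈ pointsOf τ := fun q hq =>
    (hCτ.symm ▸ hq : q ∈ normalCurve f ∩ pointsOf τ).2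
  refine ⟨τ, hτ, hτH, fun hLτ => hp₃L ⟨hp₃.1, ?_⟩, hCτ ▸ Set.disjoint_left.2 fun q hq =>
    (hSD hq).2, hCτ ▸ hS3⟩
  rw [sup_span_singleton_eq hLτ (by rw [hτ, hL]) (mem_pointsOf_iff_rep_mem.1 (hSτ p (by simp))) hpL]
  exact hSτ p₃ (by simp)

lemma ncard_inter_plane_eq_four {K : Set (ℙ 𝕜 V)}
    (hsec : K ∩ pointsOf H = pointsOf L ∪ normalCurve f) (hL : finrank 𝕜 L = 2)
    (hτ : finrank 𝕜 τ = 3) (hH : finrank 𝕜 H = 4) (hτH : τ ≤ H) (hLτ : ¬L ≤ τ)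
    (hdisj : Disjoint (normalCurve f ∩ pointsOf τ) (pointsOf L))
    (hCτ : (normalCurve f ∩ pointsOf τ).ncard = 3) : (K ∩ pointsOf τ).ncard = 4 := by
  have := Module.finite_of_finite 𝕜 (M := V)
  have hLH : L ≤ H := pointsOf_subset_pointsOf_iff.1
    ((hsec ▸ Set.subset_union_left : pointsOf L ⊆ K ∩ pointsOf H).trans Set.inter_subset_right)
  have hKτ : K ∩ pointsOf τ = pointsOf (L ⊓ τ) ∪ (normalCurve f ∩ pointsOf τ) := by
    rw [← Set.inter_eq_right.2 (pointsOf_mono hτH), ← Set.inter_assoc, hsec,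
      Set.union_inter_distrib_right, pointsOf_inf, Set.inter_eq_right.2 (pointsOf_mono hτH)]
  rw [hKτ, Set.ncard_union_eq (Set.disjoint_of_subset_left
      (pointsOf_mono inf_le_left) hdisj.symm), hCτ,
    ncard_pointsOf_of_finrank_eq_one (finrank_inf_eq_one hL hτ hH hLH hτH hLτ)]

end LineAndTwistedCubic

section PG4

variable {𝕜 : Type} [Field 𝕜]

lemma _root_.IsConic.exists_eq_normalCurve {n : ℕ} {C : Set (PGPt 𝕜 n)} (h : IsConic 𝕜 n C) :
    ∃ f : (Fin 3 → 𝕜) →ₗ[𝕜] (Fin (n + 1) → 𝕜), Function.Injective f ∧ C = normalCurve f := by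
  obtain ⟨f, hf, rfl⟩ := h
  exact ⟨f, hf, by simp only [normalCurve, curveVec_three]⟩

lemma _root_.IsTwistedCubic.exists_eq_normalCurve {n : ℕ} {C : Set (PGPt 𝕜 n)}
    (h : IsTwistedCubic 𝕜 n C) :
    ∃ f : (Fin 4 → 𝕜) →ₗ[𝕜] (Fin (n + 1) → 𝕜), Function.Injective f ∧ C = normalCurve f := by
  obtain ⟨f, hf, rfl⟩ := h
  exact ⟨f, hf, by simp only [normalCurve, curveVec_four]⟩

variable [Fintype 𝕜] {K E : Set (PGPt 𝕜 4)} {τ : Submodule 𝕜 (Fin 5 → 𝕜)}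

lemma ncard_inter_line_le_one (h4 : 4 ≤ Fintype.card 𝕜) (hK : (K ∩ pointsOf τ).ncard = 4)
    {L : Set (PGPt 𝕜 4)} (hL : IsLine 𝕜 4 L) (hLK : L ⊆ K) : (K ∩ pointsOf τ ∩ L).ncard ≤ 1 := by
  obtain ⟨W, hW, rfl⟩ := hL
  refine (Set.ncard_le_one).2 fun p hp p' hp' => by_contra fun hne => ?_
  have hWτ : W ≤ τ := le_of_ne_of_mem_pointsOf hW hne hp.2 hp'.2 hp.1.2 hp'.1.2
  have := Set.ncard_le_ncard (s := pointsOf W) (t := K ∩ pointsOf τ) fun x hx =>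
    ⟨hLK hx, pointsOf_mono hWτ hx⟩
  rw [hK, ncard_pointsOf_of_finrank_eq_two hW] at this
  omega

lemma four_le_card_of_eq_biUnion_lines (h4 : 4 ≤ Fintype.card 𝕜)
    (hK : (K ∩ pointsOf τ).ncard = 4) (hτE : pointsOf τ ⊆ E) {Ls : Finset (Set (PGPt 𝕜 4))}
    (hLs : ∀ L ∈ Ls, IsLine 𝕜 4 L) (hE : K ∩ E = ⋃ L ∈ Ls, L) : 4 ≤ Ls.card := by
  have hLK (L) (hL : L ∈ Ls) : L ⊆ K :=
    (Set.subset_biUnion_of_mem (u := id) hL).trans (hE ▸ Set.inter_subset_left)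
  calc 4 = (⋃ L ∈ Ls, K ∩ pointsOf τ ∩ L).ncard := by
        rw [← Set.inter_iUnion₂, ← hE, Set.inter_eq_left.2 (Set.inter_subset_inter_right K hτE),
          hK]
    _ ≤ ∑ L ∈ Ls, (K ∩ pointsOf τ ∩ L).ncard := Finset.set_ncard_biUnion_le _ _
    _ ≤ ∑ L ∈ Ls, 1 := Finset.sum_le_sum fun L hL =>
        ncard_inter_line_le_one h4 hK (hLs L hL) (hLK L hL)
    _ = Ls.card := by simp

lemma not_typeLineConic (h4 : 4 ≤ Fintype.card 𝕜) (hK : (K ∩ pointsOf τ).ncard = 4)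
    (hτE : pointsOf τ ⊆ E) : ¬TypeLineConic 𝕜 K E := by
  rintro ⟨L, C, hL, hC, hE⟩
  obtain ⟨f, hf, rfl⟩ := hC.exists_eq_normalCurve
  have hC := card_add_one_le_ncard_normalCurve hf
  have hKE : K ∩ pointsOf τ ⊆ K ∩ E := Set.inter_subset_inter_right K hτE
  have hL1 := ncard_inter_line_le_one h4 hK hL ((hE ▸ Set.subset_union_left).trans
    Set.inter_subset_left)
  -- three of the four points lie on the conic, which is then contained in the plane
  have hCτ : 3 ≤ (normalCurve f ∩ pointsOf τ).ncard := by
    have hcover : K ∩ pointsOf τ ⊆ (K ∩ pointsOf τ ∩ L) ∪ (normalCurve f ∩ pointsOf τ) :=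
      fun p hp => (hE ▸ hKE hp).imp (⟨hp, ·⟩) (⟨·, hp.2⟩)
    have := (Set.ncard_le_ncard hcover).trans (Set.ncard_union_le _ _)
    omega
  have hsub : normalCurve f ⊆ K ∩ pointsOf τ := fun p hp =>
    ⟨(hE ▸ Or.inr hp : p ∈ K ∩ E).1, normalCurve_subset_pointsOf hf (by omega) hCτ hp⟩
  have := Set.ncard_le_ncard hsub
  omega

lemma not_typeTwistedCubic (h4 : 4 ≤ Fintype.card 𝕜) (hK : (K ∩ pointsOf τ).ncard = 4)
    (hτ : finrank 𝕜 τ = 3) (hτE : pointsOf τ ⊆ E) : ¬TypeTwistedCubic 𝕜 K E := by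
  rintro ⟨C, hC, hE⟩
  obtain ⟨f, hf, rfl⟩ := hC.exists_eq_normalCurve
  have hsub : K ∩ pointsOf τ ⊆ normalCurve f ∩ pointsOf τ := fun p hp =>
    ⟨hE ▸ Set.inter_subset_inter_right K hτE hp, hp.2⟩
  have := (Set.ncard_le_ncard hsub).trans (ncard_normalCurve_inter_pointsOf_le hf
    (four_le_ncard_normalCurve (by omega) hf) (hτ.trans_lt (by norm_num)))
  rw [hτ] at this
  omega

lemma two_mul_le_ncard_of_typeLineTwistedCubic (h3 : 3 ≤ Fintype.card 𝕜)
    (h : TypeLineTwistedCubic 𝕜 K E) : 2 * Fintype.card 𝕜 ≤ (K ∩ E).ncard := by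
  obtain ⟨_, C, ⟨L, hL, rfl⟩, hC, hE⟩ := h
  obtain ⟨f, hf, rfl⟩ := hC.exists_eq_normalCurve
  exact hE ▸ two_mul_le_ncard_pointsOf_union_normalCurve h3 hf hL

/-- A solid through a plane meeting `K` in four points must be of the last type. -/
lemma two_mul_le_ncard_inter_solid (h4 : 4 ≤ Fintype.card 𝕜) (hyp : EightTypeHyp 𝕜 K)
    (hE : IsSolid 𝕜 E) (hT7 : ¬TypeConicTwoLines 𝕜 K E) (hτ : finrank 𝕜 τ = 3)
    (hτE : pointsOf τ ⊆ E) (hK : (K ∩ pointsOf τ).ncard = 4) :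
    2 * Fintype.card 𝕜 ≤ (K ∩ E).ncard := by
  have hlines (Ls : Finset (Set (PGPt 𝕜 4))) (hLs : ∀ L ∈ Ls, IsLine 𝕜 4 L)
      (hcard : Ls.card ≤ 3) (hE : K ∩ E = ⋃ L ∈ Ls, L) : False := by
    have := four_le_card_of_eq_biUnion_lines h4 hK hτE hLs hE
    omega
  rcases hyp E hE with ⟨L, hL, h⟩ | ⟨L, M, hL, hM, -, h⟩ | ⟨L, M, N, hL, hM, hN, -, -, -, h⟩ |
    h | h | ⟨P, h⟩ | h | h
  · exact (hlines {L} (by simpa) (by simp) (by simpa)).elim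
  · exact (hlines {L, M} (by simp [hL, hM]) (Finset.card_le_two.trans (by norm_num))
      (by simpa)).elim
  · exact (hlines {L, M, N} (by simp [hL, hM, hN]) Finset.card_le_three
      (by rw [h]; simp [Set.union_assoc])).elim
  · exact (not_typeLineConic h4 hK hτE h).elim
  · exact (not_typeTwistedCubic h4 hK hτ hτE h).elim
  · have := Set.ncard_le_ncard (h ▸ Set.inter_subset_inter_right K hτE)
    simp [hK] at this
  · exact (hT7 h).elim
  · exact two_mul_le_ncard_of_typeLineTwistedCubic (by omega) h

end PG4

end CubicScroll

open CubicScroll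

/-- if no 3-space meets `K` in a conic plus two lines, then no 3-space
meets `K` in a line together with a twisted cubic. -/
theorem stmt13 (q : ℕ) (hq : Fintype.card F = q) (h5 : 5 ≤ q) (K : Set (PGPt F 4))
    (hK : K.ncard = q ^ 2 + 2 * q + 1) (hyp : EightTypeHyp F K)
    (hnoT7 : ∀ Pi, IsSolid F Pi → ¬TypeConicTwoLines F K Pi) :
    ∀ Pi, IsSolid F Pi → ¬TypeLineTwistedCubic F K Pi := by
  rintro _ ⟨H, hH, rfl⟩ ⟨_, C, ⟨L, hL, rfl⟩, hC, hsec⟩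
  obtain ⟨f, hf, rfl⟩ := hC.exists_eq_normalCurve
  subst hq
  have hCH : normalCurve f ⊆ pointsOf H :=
    (hsec ▸ Set.subset_union_right).trans Set.inter_subset_right
  obtain ⟨τ, hτ, hτH, hLτ, hdisj, hCτ⟩ := exists_plane_inter_normalCurve_off_line h5 hf hL hCH
  have hKτ := ncard_inter_plane_eq_four hsec hL hτ hH hτH hLτ hdisj hCτ
  obtain ⟨u, hu, huτ⟩ := SetLike.exists_of_lt (lt_of_le_of_ne hτH (by rintro rfl; omega))
  obtain ⟨w, -, hw⟩ :=
    SetLike.exists_of_lt (lt_top_iff_ne_top.2 fun h : H = ⊤ => by subst h; simp at hH)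
  have hsolid (c : F) : 2 * Fintype.card F ≤ (K ∩ pointsOf (pencil τ u w c)).ncard := by
    have hE : IsSolid F (pointsOf (pencil τ u w c)) :=
      ⟨_, by rw [finrank_pencil hτH hu hw, hτ], rfl⟩
    exact two_mul_le_ncard_inter_solid (by omega) hyp hE (hnoT7 _ hE) hτ
      (pointsOf_mono (le_pencil c)) hKτ
  have hKH : 2 * Fintype.card F ≤ (K ∩ pointsOf H).ncard :=
    hsec ▸ two_mul_le_ncard_pointsOf_union_normalCurve (by omega) hf hL
  have hsum := Finset.sum_le_sum fun c (_ : c ∈ Finset.univ) => hsolid c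
  have hcount := ncard_inter_add_sum_ncard_inter_pencil_le hτH hu huτ hw K
  simp only [Finset.sum_const, Finset.card_univ, smul_eq_mul] at hsum
  nlinarith
end
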